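/- arXiv:1612.09006 — 10 statements merged into one kernel-verified Lean document; each statement's English description precedes it below -/
import Mathlib

section
/- Every many-to-one matching market (finite sets of students and universities, university capacity L ≥ 1, strict preferences on both sides with an outside option ⊥) admits at least one stable matching. -/
/-- The set of students assigned to university `u` by the matching `m`. -/
def assignedSet {S U : Type*} (m : S → Option U) (u : U) : Set S := {s | m s = some u}

/-- `m` is a matching for capacity `L`: each university gets at most `L` students
(each student automatically gets at most one university, as `m` is a function). -/
def IsMatching {S U : Type*} (L : ℕ) (m : S → Option U) : Prop :=
  ∀ u : U, (assignedSet m u).ncard ≤ L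

/-- `(s, u)` is a blocking pair for the matching `m`: the student `s` strictly prefers
`u` to her current assignment, and `u` either is underfilled and prefers `s` to being
unmatched, or strictly prefers `s` to one of its assigned students. -/
def IsBlockingPair {S U : Type*} (L : ℕ)
    (sPref : S → Option U → Option U → Prop) (uPref : U → Option S → Option S → Prop)
    (m : S → Option U) (s : S) (u : U) : Prop :=
  sPref s (some u) (m s) ∧
    (((assignedSet m u).ncard < L ∧ uPref u (some s) none) ∨
      ∃ t : S, m t = some u ∧ uPref u (some s) (some t))

/-- `m` is a stable matching: it is a matching for capacity `L`, every matched
student strictly prefers her university to `⊥`, every university strictly prefers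
each of its assigned students to `⊥`, and there is no blocking pair. -/
def IsStableMatching {S U : Type*} (L : ℕ)
    (sPref : S → Option U → Option U → Prop) (uPref : U → Option S → Option S → Prop)
    (m : S → Option U) : Prop :=
  IsMatching L m ∧
    (∀ s u, m s = some u → sPref s (some u) none) ∧
    (∀ s u, m s = some u → uPref u (some s) none) ∧
    ∀ s u, ¬ IsBlockingPair L sPref uPref m s u

/-!
Each agent chooses responsively among the partners available to it: its `k` most preferred
acceptable ones, with `k = 1` for a student and `k = L` for a university. Such choices are
substitutable (a partner chosen from a set is still chosen from any subset containing it), so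
the rejections `X \ ch X` grow with `X`. Hence the map sending the pairs `XS` open to the
students to the pairs that the universities do not reject from `XU`, the pairs the students do
not reject from `XS`, is monotone, and Tarski's theorem gives a fixed point (Hatfield–Milgrom).
There both sides choose the same set of pairs, and it is stable: a student prefers no university
open to her in `XS` to her choice, and a pair outside `XS` was rejected by its university in
favour of `L` better students.
-/

open Finset Function
open scoped Classical

noncomputable section

section PrefTop

variable {α : Type*}

def prefRank (r : α → α → Prop) (A : Finset α) (a : α) : ℕ := #{b ∈ A | r b a}

def prefTop (r : α → α → Prop) (k : ℕ) (A : Finset α) : Finset α :=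
  {a ∈ A | prefRank r A a < k}

variable {r : α → α → Prop} {k : ℕ} {A B : Finset α} {a b : α}

theorem prefTop_subset : prefTop r k A ⊆ A := filter_subset _ _

theorem mem_prefTop_of_subset (hAB : A ⊆ B) (ha : a ∈ A) (h : a ∈ prefTop r k B) :
    a ∈ prefTop r k A := by
  simp only [prefTop, mem_filter] at h ⊢
  exact ⟨ha, (card_le_card (filter_subset_filter _ hAB)).trans_lt h.2⟩

variable [IsStrictTotalOrder α r]

theorem filter_rel_subset_filter_rel (hab : r a b) : {c ∈ A | r c a} ⊆ {c ∈ A | r c b} :=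
  monotone_filter_right _ fun _ _ hca => _root_.trans hca hab

theorem prefRank_lt_card (ha : a ∈ A) : prefRank r A a < #A :=
  card_lt_card (filter_ssubset.2 ⟨a, ha, irrefl a⟩)

theorem prefRank_lt_prefRank (ha : a ∈ A) (hab : r a b) : prefRank r A a < prefRank r A b :=
  card_lt_card <| (ssubset_iff_of_subset (filter_rel_subset_filter_rel hab)).2
    ⟨a, mem_filter.2 ⟨ha, hab⟩, fun h => irrefl a (mem_filter.1 h).2⟩

theorem prefRank_injOn : Set.InjOn (prefRank r A) A := by
  intro a ha b hb hab
  rcases trichotomous_of r a b with h | h | h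
  · exact absurd hab (prefRank_lt_prefRank ha h).ne
  · exact h
  · exact absurd hab (prefRank_lt_prefRank hb h).ne'

theorem image_prefRank : A.image (prefRank r A) = range #A :=
  eq_of_subset_of_card_le (image_subset_iff.2 fun _ ha => mem_range.2 (prefRank_lt_card ha))
    (by rw [card_range, card_image_of_injOn prefRank_injOn])

theorem card_prefTop : #(prefTop r k A) = min k #A := by
  have himage : (prefTop r k A).image (prefRank r A) = range (min k #A) := by
    have h := filter_image (s := A) (f := prefRank r A) (p := (· < k))
    rw [prefTop, ← h, image_prefRank]
    ext n
    simp only [mem_filter, mem_range]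
    omega
  rw [← card_range (min k #A), ← himage,
    card_image_of_injOn (prefRank_injOn.mono prefTop_subset)]

theorem rel_of_mem_prefTop (hb : k ≤ prefRank r A b) (ha : a ∈ prefTop r k A) : r a b := by
  have hak : prefRank r A a < k := (mem_filter.1 ha).2
  rcases trichotomous_of r a b with h | rfl | h
  · exact h
  · omega
  · have := card_le_card (filter_rel_subset_filter_rel (A := A) h)
    simp only [prefRank] at hak hb
    omega

end PrefTop

section AcceptableChoice

variable {β : Type*}

def acceptableChoice (r : Option β → Option β → Prop) (k : ℕ) (A : Finset β) : Finset β :=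
  prefTop (r on some) k {b ∈ A | r (some b) none}

variable {r : Option β → Option β → Prop} {k : ℕ} {A B : Finset β} {a b : β}

theorem mem_of_mem_acceptableChoice (h : b ∈ acceptableChoice r k A) :
    b ∈ A ∧ r (some b) none :=
  mem_filter.1 (prefTop_subset h)

theorem mem_acceptableChoice_of_subset (hAB : A ⊆ B) (hb : b ∈ A)
    (h : b ∈ acceptableChoice r k B) : b ∈ acceptableChoice r k A :=
  mem_prefTop_of_subset (filter_subset_filter _ hAB)
    (mem_filter.2 ⟨hb, (mem_of_mem_acceptableChoice h).2⟩) h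

theorem le_prefRank_of_notMem_acceptableChoice (hb : b ∈ A) (hacc : r (some b) none)
    (hnot : b ∉ acceptableChoice r k A) :
    k ≤ prefRank (r on some) {c ∈ A | r (some c) none} b := by
  simpa [acceptableChoice, prefTop, hb, hacc] using hnot

theorem isStrictTotalOrder_onFun_some (r : Option β → Option β → Prop)
    [IsStrictTotalOrder (Option β) r] : IsStrictTotalOrder β (r on some) :=
  Injective.isStrictTotalOrder_onFun r (Option.some_injective β)

variable [IsStrictTotalOrder (Option β) r]

theorem card_acceptableChoice_le : #(acceptableChoice r k A) ≤ k :=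
  have := isStrictTotalOrder_onFun_some r
  card_prefTop.trans_le (min_le_left _ _)

theorem le_card_acceptableChoice_of_notMem (hb : b ∈ A) (hacc : r (some b) none)
    (hnot : b ∉ acceptableChoice r k A) : k ≤ #(acceptableChoice r k A) := by
  have := isStrictTotalOrder_onFun_some r
  rw [acceptableChoice, card_prefTop]
  exact le_min le_rfl ((le_prefRank_of_notMem_acceptableChoice hb hacc hnot).trans
    (prefRank_lt_card (mem_filter.2 ⟨hb, hacc⟩)).le)

theorem rel_of_notMem_acceptableChoice (hb : b ∈ A) (hacc : r (some b) none)
    (hnot : b ∉ acceptableChoice r k A) (ha : a ∈ acceptableChoice r k A) :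
    r (some a) (some b) :=
  have := isStrictTotalOrder_onFun_some r
  rel_of_mem_prefTop (r := r on some) (le_prefRank_of_notMem_acceptableChoice hb hacc hnot) ha

end AcceptableChoice

section Substitutable

variable {α : Type*}

structure IsSubstitutable (ch : Set α → Set α) : Prop where
  subset : ∀ X, ch X ⊆ X
  mem_of_subset : ∀ {X Y}, X ⊆ Y → ∀ x ∈ X, x ∈ ch Y → x ∈ ch X

variable {ch chS chU : Set α → Set α}

theorem IsSubstitutable.monotone_diff (h : IsSubstitutable ch) : Monotone fun X => X \ ch X :=
  fun _ _ hXY x hx => ⟨hXY hx.1, fun hy => hx.2 (h.mem_of_subset hXY x hx.1 hy)⟩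

theorem IsSubstitutable.exists_choice_eq (hS : IsSubstitutable chS) (hU : IsSubstitutable chU) :
    ∃ XS XU : Set α, chS XS = chU XU ∧ XSᶜ ⊆ XU \ chU XU := by
  let f : Set α →o Set α :=
    ⟨fun X => ((X \ chS X)ᶜ \ chU (X \ chS X)ᶜ)ᶜ, fun _ _ h =>
      compl_le_compl (hU.monotone_diff (compl_le_compl (hS.monotone_diff h)))⟩
  have hfix : f f.lfp = f.lfp := f.map_lfp
  set XS := f.lfp
  set XU := (XS \ chS XS)ᶜ
  have hXS : XS = (XU \ chU XU)ᶜ := hfix.symm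
  refine ⟨XS, XU, ?_, by rw [hXS, compl_compl]⟩
  ext x
  have hxS : x ∈ XS ↔ ¬(x ∈ XU ∧ x ∉ chU XU) := by rw [hXS]; rfl
  have hxU : x ∈ XU ↔ ¬(x ∈ XS ∧ x ∉ chS XS) := Iff.rfl
  have := hS.subset XS (a := x)
  have := hU.subset XU (a := x)
  tauto

end Substitutable

section Market

variable {S U : Type*}

def assignment (μ : Set (S × U)) (s : S) : Option U :=
  if h : ∃ u, (s, u) ∈ μ then some h.choose else none

theorem assignment_eq_some_iff {μ : Set (S × U)}
    (hμ : ∀ {s u v}, (s, u) ∈ μ → (s, v) ∈ μ → u = v) {s : S} {u : U} :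
    assignment μ s = some u ↔ (s, u) ∈ μ := by
  unfold assignment
  split_ifs with h
  · exact ⟨fun hu => Option.some_injective _ hu ▸ h.choose_spec,
      fun hu => congrArg some (hμ h.choose_spec hu)⟩
  · exact ⟨nofun, fun hu => h ⟨u, hu⟩⟩

def studentChoice [Fintype U] (sPref : S → Option U → Option U → Prop) (X : Set (S × U)) :
    Set (S × U) :=
  {p | p.2 ∈ acceptableChoice (sPref p.1) 1 {u | (p.1, u) ∈ X}}

def universityChoice [Fintype S] (L : ℕ) (uPref : U → Option S → Option S → Prop)
    (X : Set (S × U)) : Set (S × U) :=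
  {p | p.1 ∈ acceptableChoice (uPref p.2) L {s | (s, p.2) ∈ X}}

theorem isSubstitutable_studentChoice [Fintype U] (sPref : S → Option U → Option U → Prop) :
    IsSubstitutable (studentChoice sPref) where
  subset _ _ hp := by simpa using (mem_of_mem_acceptableChoice hp).1
  mem_of_subset hXY _ hp h :=
    mem_acceptableChoice_of_subset (fun _ hu => by simpa using hXY (by simpa using hu))
      (by simpa using hp) h

theorem isSubstitutable_universityChoice [Fintype S] (L : ℕ)
    (uPref : U → Option S → Option S → Prop) :
    IsSubstitutable (universityChoice L uPref) where
  subset _ _ hp := by simpa using (mem_of_mem_acceptableChoice hp).1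
  mem_of_subset hXY _ hp h :=
    mem_acceptableChoice_of_subset (fun _ hs => by simpa using hXY (by simpa using hs))
      (by simpa using hp) h

variable {L : ℕ} {sPref : S → Option U → Option U → Prop}
  {uPref : U → Option S → Option S → Prop}

theorem eq_of_mem_studentChoice [Fintype U]
    (hs : ∀ s, IsStrictTotalOrder (Option U) (sPref s)) {X : Set (S × U)} {s : S} {u v : U}
    (hu : (s, u) ∈ studentChoice sPref X) (hv : (s, v) ∈ studentChoice sPref X) : u = v :=
  have := hs s
  card_le_one.1 card_acceptableChoice_le _ hu _ hv

theorem notMem_of_prefers_assignment [Fintype U]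
    (hs : ∀ s, IsStrictTotalOrder (Option U) (sPref s)) {X : Set (S × U)} {s : S} {u : U}
    (h : sPref s (some u) (assignment (studentChoice sPref X) s)) : (s, u) ∉ X := by
  have := hs s
  have hm : ∀ {v}, assignment (studentChoice sPref X) s = some v ↔
      (s, v) ∈ studentChoice sPref X :=
    assignment_eq_some_iff (eq_of_mem_studentChoice hs)
  have hacc : sPref s (some u) none := by
    cases hv : assignment (studentChoice sPref X) s with
    | none => rwa [hv] at h
    | some v => rw [hv] at h; exact _root_.trans h (mem_of_mem_acceptableChoice (hm.1 hv)).2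
  intro hX
  replace hX : u ∈ ({v | (s, v) ∈ X} : Finset U) := by simpa using hX
  by_cases hchosen : (s, u) ∈ studentChoice sPref X
  · rw [hm.2 hchosen] at h
    exact irrefl _ h
  · obtain ⟨v, hv⟩ := card_pos.1 (le_card_acceptableChoice_of_notMem hX hacc hchosen)
    rw [hm.2 hv] at h
    exact asymm h (rel_of_notMem_acceptableChoice hX hacc hchosen hv)

theorem isStableMatching_assignment [Fintype S] [Fintype U]
    (hs : ∀ s, IsStrictTotalOrder (Option U) (sPref s))
    (hu : ∀ u, IsStrictTotalOrder (Option S) (uPref u)) {XS XU : Set (S × U)}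
    (hch : studentChoice sPref XS = universityChoice L uPref XU)
    (hrej : XSᶜ ⊆ XU \ universityChoice L uPref XU) :
    IsStableMatching L sPref uPref (assignment (studentChoice sPref XS)) := by
  set m := assignment (studentChoice sPref XS)
  have hm : ∀ {s u}, m s = some u ↔ (s, u) ∈ universityChoice L uPref XU :=
    hch ▸ assignment_eq_some_iff (eq_of_mem_studentChoice hs)
  have hassigned : ∀ u,
      assignedSet m u = ↑(acceptableChoice (uPref u) L {s | (s, u) ∈ XU}) := by
    intro u
    ext s
    simp [assignedSet, hm, universityChoice]
  refine ⟨fun u => ?_, fun s u h => ?_, fun s u h => ?_, fun s u hb => ?_⟩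
  · have := hu u
    rw [hassigned, Set.ncard_coe_finset]
    exact card_acceptableChoice_le
  · exact (mem_of_mem_acceptableChoice (hch ▸ hm.1 h : (s, u) ∈ studentChoice sPref XS)).2
  · exact (mem_of_mem_acceptableChoice (hm.1 h)).2
  · have := hu u
    obtain ⟨hXU, hnot⟩ := hrej (notMem_of_prefers_assignment hs hb.1)
    replace hXU : s ∈ ({t | (t, u) ∈ XU} : Finset S) := by simpa using hXU
    have hacc : uPref u (some s) none := by
      rcases hb.2 with ⟨-, h⟩ | ⟨t, ht, hst⟩
      · exact h
      · exact _root_.trans hst (mem_of_mem_acceptableChoice (hm.1 ht)).2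
    rcases hb.2 with ⟨hlt, -⟩ | ⟨t, ht, hst⟩
    · rw [hassigned, Set.ncard_coe_finset] at hlt
      exact hlt.not_ge (le_card_acceptableChoice_of_notMem hXU hacc hnot)
    · exact asymm hst (rel_of_notMem_acceptableChoice hXU hacc hnot (hm.1 ht))

end Market

end

theorem exists_stable_matching_general {S U : Type*} [Fintype S] [Fintype U]
    (L : ℕ)
    (sPref : S → Option U → Option U → Prop) (uPref : U → Option S → Option S → Prop)
    (hs : ∀ s, IsStrictTotalOrder (Option U) (sPref s))
    (hu : ∀ u, IsStrictTotalOrder (Option S) (uPref u)) :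
    ∃ m : S → Option U, IsStableMatching L sPref uPref m := by
  obtain ⟨XS, XU, hch, hrej⟩ := (isSubstitutable_studentChoice sPref).exists_choice_eq
    (isSubstitutable_universityChoice L uPref)
  exact ⟨_, isStableMatching_assignment hs hu hch hrej⟩

/-- Every many-to-one matching market admits at least one stable matching. -/
theorem exists_stable_matching {S U : Type*} [Fintype S] [Fintype U]
    (L : ℕ) (hL : 1 ≤ L)
    (sPref : S → Option U → Option U → Prop) (uPref : U → Option S → Option S → Prop)
    (hs : ∀ s, IsStrictTotalOrder (Option U) (sPref s))
    (hu : ∀ u, IsStrictTotalOrder (Option S) (uPref u)) :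
    ∃ m : S → Option U, IsStableMatching L sPref uPref m :=
  exists_stable_matching_general L sPref uPref hs hu
end

section
/- In every many-to-one matching market there exists a stable matching M* such that for every university u, the set M*(u) of students assigned to u consists precisely of the min(L, |S(u)|) students in S(u) that u most prefers, where S(u) is the set of stable partners of u; moreover M* is the unique stable matching with this property. -/
/-- `stablePartners L sPref uPref u` is the set `S(u)` of stable partners of university
`u`: the students assigned to `u` in at least one stable matching. -/
def stablePartners {S U : Type*} (L : ℕ)
    (sPref : S → Option U → Option U → Prop) (uPref : U → Option S → Option S → Prop)
    (u : U) : Set S :=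
  {s | ∃ m : S → Option U, IsStableMatching L sPref uPref m ∧ m s = some u}

/-!
Universities propose, deferred-acceptance style. The invariant is that no student holds an offer
she prefers to her partner in a stable matching `m`: a university `u` with a free seat proposes to
its favourite acceptable student `s` not yet asked, and if `s` preferred `u` to her partner in `m`,
stability of `m` would make `u` full in `m` with students it prefers to `s`; these were asked before
`s`, so they all hold `u`'s offer, too many for the free seat. Once no university can propose, the
held offers form a stable matching that is worst for every student. A stable partner `t` of `u`
not assigned to `u` there prefers `u` to her assignment, so `u` is full and prefers each of its
students to `t`: `u` gets exactly its top `min L |S(u)|` stable partners, and these sets determine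
the matching.
-/

section Best

variable {α : Type*}

/-- A best element of `C`, reading `r a b` as "`a` is preferred to `b`"; junk if none exists. -/
noncomputable def best [Nonempty α] (r : α → α → Prop) (C : Set α) : α :=
  Classical.epsilon fun a => a ∈ C ∧ ∀ b ∈ C, ¬ r b a

variable [Nonempty α] [Finite α] {r : α → α → Prop} {C : Set α}

theorem best_spec [IsStrictOrder α r] (hC : C.Nonempty) :
    best r C ∈ C ∧ ∀ b ∈ C, ¬ r b (best r C) :=
  Classical.epsilon_spec ((Finite.wellFounded_of_trans_of_irrefl r).has_min C hC)

theorem best_eq [IsStrictTotalOrder α r] {a : α} (ha : a ∈ C) (h : ∀ b ∈ C, ¬ r b a) :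
    best r C = a := by
  obtain ⟨hmem, hmin⟩ := best_spec (r := r) ⟨a, ha⟩
  exact ((trichotomous_of r _ a).resolve_left (h _ hmem)).resolve_right (hmin a ha)

end Best

section TopSubset

variable {α : Type*} {r : α → α → Prop} {T A B : Set α} {k : ℕ}

def IsTopSubset (r : α → α → Prop) (T : Set α) (k : ℕ) (A : Set α) : Prop :=
  A ⊆ T ∧ A.ncard = k ∧ ∀ t ∈ T, t ∉ A → ∀ a ∈ A, r a t

theorem IsTopSubset.unique [Finite α] [Std.Asymm r] (hA : IsTopSubset r T k A)
    (hB : IsTopSubset r T k B) : A = B := by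
  have hAB : A ⊆ B := by
    intro a ha
    by_contra haB
    have hBA : ¬ B ⊆ A := fun h =>
      haB (Set.eq_of_subset_of_ncard_le h (hA.2.1.trans hB.2.1.symm).le ▸ ha)
    obtain ⟨b, hb, hbA⟩ := Set.not_subset.1 hBA
    exact asymm_of r (hB.2.2 a (hA.1 ha) haB b hb) (hA.2.2 b (hB.1 hb) hbA a ha)
  exact Set.eq_of_subset_of_ncard_le hAB (hB.2.1.trans hA.2.1.symm).le

end TopSubset

section StableMatching

variable {S U : Type*} {L : ℕ} {sPref : S → Option U → Option U → Prop}
  {uPref : U → Option S → Option S → Prop} {m : S → Option U} {s t : S} {u : U}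

theorem eq_of_forall_assignedSet_eq {m m' : S → Option U}
    (h : ∀ u, assignedSet m u = assignedSet m' u) : m = m' :=
  funext fun s => Option.ext fun u => Set.ext_iff.1 (h u) s

theorem IsStableMatching.not_prefers_none [IsStrictOrder (Option U) (sPref s)]
    (hm : IsStableMatching L sPref uPref m) : ¬ sPref s none (m s) := by
  cases h : m s with
  | none => exact irrefl_of (sPref s) none
  | some u => exact asymm_of (sPref s) (hm.2.1 s u h)

theorem IsStableMatching.ncard_assignedSet_eq (hm : IsStableMatching L sPref uPref m)
    (hsu : sPref s (some u) (m s)) (hacc : uPref u (some s) none) :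
    (assignedSet m u).ncard = L :=
  (hm.1 u).antisymm (not_lt.1 fun hlt => hm.2.2.2 s u ⟨hsu, .inl ⟨hlt, hacc⟩⟩)

theorem IsStableMatching.prefers_of_mem_assignedSet [Std.Irrefl (sPref s)]
    [Std.Trichotomous (uPref u)] (hm : IsStableMatching L sPref uPref m)
    (hsu : sPref s (some u) (m s)) (ht : t ∈ assignedSet m u) : uPref u (some t) (some s) := by
  rcases trichotomous_of (uPref u) (some t) (some s) with h | h | h
  · exact h
  · cases h
    exact absurd (ht ▸ hsu) (irrefl_of (sPref _) _)
  · exact absurd ⟨hsu, .inr ⟨t, ht, h⟩⟩ (hm.2.2.2 s u)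

end StableMatching

section DeferredAcceptance

variable {S U : Type*} {L : ℕ} {sPref : S → Option U → Option U → Prop}
  {uPref : U → Option S → Option S → Prop} {P Q : Set (S × U)} {s s₀ : S} {u u₀ : U}
  {o : Option U}

/-- The options of `s` when `(s, u) ∈ P` records that `u` has proposed to `s`: these proposals
and `⊥`. -/
def offers (P : Set (S × U)) (s : S) : Set (Option U) := {o | ∀ u ∈ o, (s, u) ∈ P}

theorem none_mem_offers : none ∈ offers P s := by simp [offers]

theorem some_mem_offers : some u ∈ offers P s ↔ (s, u) ∈ P := by simp [offers]

theorem offers_mono (h : P ⊆ Q) : offers P s ⊆ offers Q s := fun _ ho u hu => h (ho u hu)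

noncomputable def hold (sPref : S → Option U → Option U → Prop) (P : Set (S × U)) (s : S) :
    Option U :=
  best (sPref s) (offers P s)

section Hold

variable [Finite U] [∀ s, IsStrictOrder (Option U) (sPref s)]

theorem hold_mem_offers : hold sPref P s ∈ offers P s := (best_spec ⟨none, none_mem_offers⟩).1

theorem not_prefers_to_hold (ho : o ∈ offers P s) : ¬ sPref s o (hold sPref P s) :=
  (best_spec ⟨none, none_mem_offers⟩).2 o ho

theorem mem_of_hold_eq_some (h : hold sPref P s = some u) : (s, u) ∈ P :=
  some_mem_offers.1 (h ▸ hold_mem_offers)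

theorem hold_empty : hold sPref ∅ s = none :=
  Option.eq_none_iff_forall_ne_some.2 fun _ h => mem_of_hold_eq_some h

end Hold

section HoldTotal

variable [Finite U] [∀ s, IsStrictTotalOrder (Option U) (sPref s)]

theorem prefers_none_of_hold_eq_some (h : hold sPref P s = some u) : sPref s (some u) none := by
  rcases trichotomous_of (sPref s) (some u) none with h' | h' | h'
  · exact h'
  · cases h'
  · exact absurd (h ▸ h') (not_prefers_to_hold none_mem_offers)

variable (sPref P s₀ u₀) in
theorem hold_insert_eq_or (s : S) :
    hold sPref (insert (s₀, u₀) P) s = hold sPref P s ∨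
      s = s₀ ∧ hold sPref (insert (s₀, u₀) P) s = some u₀ := by
  by_cases hold_mem : hold sPref (insert (s₀, u₀) P) s ∈ offers P s
  · exact .inl (best_eq hold_mem fun o ho =>
      not_prefers_to_hold (offers_mono (Set.subset_insert _ _) ho)).symm
  · obtain ⟨u, hu, huP⟩ : ∃ u, hold sPref (insert (s₀, u₀) P) s = some u ∧ (s, u) ∉ P := by
      simpa [offers] using hold_mem
    obtain ⟨rfl, rfl⟩ := Prod.mk.inj
      ((Set.mem_insert_iff.1 (mem_of_hold_eq_some hu)).resolve_right huP)
    exact .inr ⟨rfl, hu⟩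

end HoldTotal

variable (L sPref uPref) in
/-- The invariant of university-proposing deferred acceptance. -/
structure IsProposalState (P : Set (S × U)) : Prop where
  acceptable : ∀ s u, (s, u) ∈ P → uPref u (some s) none
  upward_closed : ∀ s t u, (s, u) ∈ P → uPref u (some t) (some s) → (t, u) ∈ P
  isMatching : IsMatching L (hold sPref P)
  not_prefers_hold : ∀ m, IsStableMatching L sPref uPref m → ∀ s, ¬ sPref s (hold sPref P s) (m s)

namespace IsProposalState

theorem empty [Finite U] [∀ s, IsStrictOrder (Option U) (sPref s)] :
    IsProposalState L sPref uPref ∅ where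
  acceptable _ _ h := h.elim
  upward_closed _ _ _ h := h.elim
  isMatching u := by simp [assignedSet, hold_empty]
  not_prefers_hold _ hm s := by rw [hold_empty]; exact hm.not_prefers_none

theorem hold_eq_of_isStableMatching [Finite U] [∀ s, IsStrictTotalOrder (Option U) (sPref s)]
    (hP : IsProposalState L sPref uPref P) {m : S → Option U}
    (hm : IsStableMatching L sPref uPref m) (hsu : m s = some u) (hsuP : (s, u) ∈ P) :
    hold sPref P s = some u :=
  ((trichotomous_of (sPref s) _ _).resolve_left (hsu ▸ hP.not_prefers_hold m hm s)).resolve_right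
    (not_prefers_to_hold (some_mem_offers.2 hsuP))

theorem isStableMatching_hold [Finite U] [∀ s, IsStrictTotalOrder (Option U) (sPref s)]
    (hP : IsProposalState L sPref uPref P)
    (hdone : ∀ u, (assignedSet (hold sPref P) u).ncard < L →
      ∀ s, uPref u (some s) none → (s, u) ∈ P) :
    IsStableMatching L sPref uPref (hold sPref P) := by
  refine ⟨hP.isMatching, fun s u h => prefers_none_of_hold_eq_some h,
    fun s u h => hP.acceptable s u (mem_of_hold_eq_some h), ?_⟩
  rintro s u ⟨hsu, hblock⟩
  refine not_prefers_to_hold (some_mem_offers.2 ?_) hsu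
  rcases hblock with ⟨hroom, hacc⟩ | ⟨t, ht, hst⟩
  · exact hdone u hroom s hacc
  · exact hP.upward_closed t s u (mem_of_hold_eq_some ht) hst

theorem propose [Finite S] [Finite U] [∀ s, IsStrictTotalOrder (Option U) (sPref s)]
    [∀ u, IsStrictTotalOrder (Option S) (uPref u)] (hP : IsProposalState L sPref uPref P)
    (hroom : (assignedSet (hold sPref P) u₀).ncard < L) (hacc : uPref u₀ (some s₀) none)
    (hbest : ∀ t, uPref u₀ (some t) none → (t, u₀) ∉ P → ¬ uPref u₀ (some t) (some s₀)) :
    IsProposalState L sPref uPref (insert (s₀, u₀) P) where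
  acceptable s u h := by
    rcases h with h | h
    · obtain ⟨rfl, rfl⟩ := Prod.mk.inj h
      exact hacc
    · exact hP.acceptable s u h
  upward_closed s t u h hts := by
    rcases h with h | h
    · obtain ⟨rfl, rfl⟩ := Prod.mk.inj h
      by_contra htP
      exact hbest t (trans_of (uPref u) hts hacc) (htP ∘ Set.mem_insert_of_mem _) hts
    · exact Set.mem_insert_of_mem _ (hP.upward_closed s t u h hts)
  isMatching u := by
    obtain rfl | hu := eq_or_ne u u₀
    · have hsub : assignedSet (hold sPref (insert (s₀, u) P)) u ⊆
          insert s₀ (assignedSet (hold sPref P) u) := fun t ht => by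
        rcases hold_insert_eq_or sPref P s₀ u t with h | ⟨rfl, -⟩
        · exact Set.mem_insert_of_mem _ (h.symm.trans ht)
        · exact Set.mem_insert _ _
      exact (Set.ncard_le_ncard hsub).trans ((Set.ncard_insert_le _ _).trans hroom)
    · refine (Set.ncard_le_ncard fun t ht => ?_).trans (hP.isMatching u)
      rcases hold_insert_eq_or sPref P s₀ u₀ t with h | ⟨-, h⟩
      · exact h.symm.trans ht
      · exact absurd (Option.some_injective _ (h.symm.trans ht)) hu.symm
  not_prefers_hold m hm s := by
    rcases hold_insert_eq_or sPref P s₀ u₀ s with h | ⟨rfl, h⟩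
    · exact h ▸ hP.not_prefers_hold m hm s
    rw [h]
    intro hpref
    have hsub : assignedSet m u₀ ⊆ assignedSet (hold sPref P) u₀ := fun t ht =>
      hP.hold_eq_of_isStableMatching hm ht <| by_contra fun htP =>
        hbest t (hm.2.2.1 t u₀ ht) htP (hm.prefers_of_mem_assignedSet hpref ht)
    exact (Set.ncard_le_ncard hsub).not_gt (hm.ncard_assignedSet_eq hpref hacc ▸ hroom)

end IsProposalState

end DeferredAcceptance

section UniversityOptimal

variable {S U : Type*} {L : ℕ} {sPref : S → Option U → Option U → Prop}
  {uPref : U → Option S → Option S → Prop} {t : S} {u : U}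

/-- Rather than running deferred acceptance, take a maximal proposal state: if a university with a
free seat could still propose, it would not be maximal. -/
theorem exists_student_pessimal_stable_matching [Finite S] [Finite U]
    [∀ s, IsStrictTotalOrder (Option U) (sPref s)] [∀ u, IsStrictTotalOrder (Option S) (uPref u)] :
    ∃ m, IsStableMatching L sPref uPref m ∧
      ∀ m', IsStableMatching L sPref uPref m' → ∀ s, ¬ sPref s (m s) (m' s) := by
  obtain ⟨P, hP, hmax⟩ := (Set.toFinite {P | IsProposalState L sPref uPref P}).exists_maximal
    ⟨∅, IsProposalState.empty⟩
  refine ⟨hold sPref P, hP.isStableMatching_hold fun u hroom s hacc => ?_, hP.not_prefers_hold⟩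
  by_contra hsP
  obtain ⟨s₀, ⟨hacc₀, hs₀P⟩, hbest⟩ :=
    (Finite.wellFounded_of_trans_of_irrefl (InvImage (uPref u) some)).has_min
      {t | uPref u (some t) none ∧ (t, u) ∉ P} ⟨s, hacc, hsP⟩
  exact hs₀P <| hmax (hP.propose hroom hacc₀ fun t ht htP => hbest t ⟨ht, htP⟩)
    (Set.subset_insert _ _) (Set.mem_insert _ _)

theorem prefers_of_mem_stablePartners [Std.Trichotomous (sPref t)] {m : S → Option U}
    (hpess : ∀ m', IsStableMatching L sPref uPref m' → ∀ s, ¬ sPref s (m s) (m' s))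
    (ht : t ∈ stablePartners L sPref uPref u) (htm : t ∉ assignedSet m u) :
    sPref t (some u) (m t) ∧ uPref u (some t) none := by
  obtain ⟨m', hm', hm't⟩ := ht
  refine ⟨?_, hm'.2.2.1 t u hm't⟩
  rcases trichotomous_of (sPref t) (some u) (m t) with h | h | h
  · exact h
  · exact absurd h.symm htm
  · exact absurd h (hm't ▸ hpess m' hm' t)

theorem isTopSubset_of_student_pessimal [Finite S]
    [∀ s, IsStrictTotalOrder (Option U) (sPref s)] [∀ u, IsStrictTotalOrder (Option S) (uPref u)]
    {m : S → Option U} (hm : IsStableMatching L sPref uPref m)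
    (hpess : ∀ m', IsStableMatching L sPref uPref m' → ∀ s, ¬ sPref s (m s) (m' s)) (u : U) :
    IsTopSubset (InvImage (uPref u) some) (stablePartners L sPref uPref u)
      (min L (stablePartners L sPref uPref u).ncard) (assignedSet m u) := by
  have hsub : assignedSet m u ⊆ stablePartners L sPref uPref u := fun t ht => ⟨m, hm, ht⟩
  have hfull_above : ∀ t ∈ stablePartners L sPref uPref u, t ∉ assignedSet m u →
      (assignedSet m u).ncard = L ∧ ∀ a ∈ assignedSet m u, uPref u (some a) (some t) :=
    fun t ht htm =>
      let ⟨hpref, hacc⟩ := prefers_of_mem_stablePartners hpess ht htm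
      ⟨hm.ncard_assignedSet_eq hpref hacc, fun a ha => hm.prefers_of_mem_assignedSet hpref ha⟩
  refine ⟨hsub, ?_, fun t ht htm => (hfull_above t ht htm).2⟩
  by_cases hall : stablePartners L sPref uPref u ⊆ assignedSet m u
  · rw [← hsub.antisymm hall]
    exact (min_eq_right (hm.1 u)).symm
  · obtain ⟨t, ht, htm⟩ := Set.not_subset.1 hall
    have hfull := (hfull_above t ht htm).1
    rw [hfull, min_eq_left (hfull.symm.trans_le (Set.ncard_le_ncard hsub))]

end UniversityOptimal

theorem exists_unique_university_optimal_stable_matching_general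
    {S U : Type*} [Fintype S] [Fintype U]
    (L : ℕ)
    (sPref : S → Option U → Option U → Prop) (uPref : U → Option S → Option S → Prop)
    (hs : ∀ s, IsStrictTotalOrder (Option U) (sPref s))
    (hu : ∀ u, IsStrictTotalOrder (Option S) (uPref u)) :
    ∃! m : S → Option U,
      IsStableMatching L sPref uPref m ∧
        ∀ u : U,
          assignedSet m u ⊆ stablePartners L sPref uPref u ∧
          (assignedSet m u).ncard = min L (stablePartners L sPref uPref u).ncard ∧
          ∀ t ∈ stablePartners L sPref uPref u, t ∉ assignedSet m u →
            ∀ t' ∈ assignedSet m u, uPref u (some t') (some t) := by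
  obtain ⟨m, hm, hpess⟩ := exists_student_pessimal_stable_matching (L := L) (sPref := sPref)
    (uPref := uPref)
  refine ⟨m, ⟨hm, isTopSubset_of_student_pessimal hm hpess⟩, fun m' ⟨_, hm'⟩ => ?_⟩
  exact eq_of_forall_assignedSet_eq fun u =>
    IsTopSubset.unique (hm' u) (isTopSubset_of_student_pessimal hm hpess u)

/-- There exists a stable matching `m*` such that every university `u` is assigned
precisely the `min L |S(u)|` students of `S(u)` that `u` most prefers, and `m*` is the
unique stable matching with this property. -/
theorem exists_unique_university_optimal_stable_matching
    {S U : Type*} [Fintype S] [Fintype U]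
    (L : ℕ) (hL : 1 ≤ L)
    (sPref : S → Option U → Option U → Prop) (uPref : U → Option S → Option S → Prop)
    (hs : ∀ s, IsStrictTotalOrder (Option U) (sPref s))
    (hu : ∀ u, IsStrictTotalOrder (Option S) (uPref u)) :
    ∃! m : S → Option U,
      IsStableMatching L sPref uPref m ∧
        ∀ u : U,
          assignedSet m u ⊆ stablePartners L sPref uPref u ∧
          (assignedSet m u).ncard = min L (stablePartners L sPref uPref u).ncard ∧
          ∀ t ∈ stablePartners L sPref uPref u, t ∉ assignedSet m u →
            ∀ t' ∈ assignedSet m u, uPref u (some t') (some t) :=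
  exists_unique_university_optimal_stable_matching_general L sPref uPref hs hu
end

section
/- In every many-to-one matching market there exists a student-optimal stable matching: a stable matching M* such that for every student s and every stable matching M, student s weakly prefers her assignment in M* to her assignment in M (where unassigned means assignment ⊥). -/
open Set

section

variable {α : Type*}

theorem exists_fixedPoint_of_le_map [PartialOrder α] [WellFoundedGT α] {f : α → α}
    (hf : ∀ x, x ≤ f x) {P : α → Prop} (hP : ∀ x, P x → P (f x)) {x : α} (hx : P x) :
    ∃ y, P y ∧ f y = y := by
  induction x using WellFoundedGT.induction with
  | _ x ih =>
    by_cases hfix : f x = x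
    · exact ⟨x, hx, hfix⟩
    · exact ih (f x) ((hf x).lt_of_ne (Ne.symm hfix)) (hP x hx)

variable [Finite α] (r : α → α → Prop) [IsTrans α r] [Std.Irrefl r]

theorem le_ncard_setOf_ncard_below_lt {B : Set α} {L : ℕ} (hL : L ≤ B.ncard) :
    L ≤ {t ∈ B | {x ∈ B | r x t}.ncard < L}.ncard := by
  set W := {t ∈ B | {x ∈ B | r x t}.ncard < L}
  by_contra! hW
  -- an `r`-minimal element of `B \ W` has everything `r`-below it in `W`, so it lies in `W`
  obtain ⟨t, ⟨htB, htW⟩, hmin⟩ := (Finite.wellFounded_of_trans_of_irrefl r).has_min (B \ W)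
    (exists_mem_notMem_of_ncard_lt_ncard (hW.trans_le hL))
  have hbelow : {x ∈ B | r x t} ⊆ W := fun x ⟨hxB, hxt⟩ => by
    by_contra hxW
    exact hmin x ⟨hxB, hxW⟩ hxt
  exact htW ⟨htB, (ncard_le_ncard hbelow).trans_lt hW⟩

theorem exists_ncard_le_ncard_below_add_one [Std.Trichotomous r] {B : Set α}
    (hB : B.Nonempty) : ∃ t ∈ B, B.ncard ≤ {x ∈ B | r x t}.ncard + 1 := by
  obtain ⟨t, htB, hmax⟩ :=
    (Finite.wellFounded_of_trans_of_irrefl (Function.swap r)).has_min B hB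
  refine ⟨t, htB, (ncard_le_ncard fun x hxB => ?_).trans (ncard_insert_le t _)⟩
  rcases trichotomous_of r x t with h | h | h
  · exact Or.inr ⟨hxB, h⟩
  · exact Or.inl h
  · exact (hmax x hxB h).elim

end

namespace DeferredAcceptance

variable {S U : Type*} (L : ℕ) (sPref : S → Option U → Option U → Prop)
  (uPref : U → Option S → Option S → Prop)

/-- The option `s` proposes to when the universities in `A` have rejected her. -/
noncomputable def propose (s : S) (A : Set U) : Option U :=
  Classical.epsilon fun x => x ∉ some '' A ∧ ∀ y ∉ some '' A, ¬ sPref s y x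

variable (R : S → Set U)

def applicants (u : U) : Set S :=
  {t | propose sPref t (R t) = some u ∧ uPref u (some t) none}

def preferredApplicants (u : U) (s : S) : Set S :=
  {t ∈ applicants sPref uPref R u | uPref u (some t) (some s)}

def NoRoom (u : U) (s : S) : Prop :=
  ¬ uPref u (some s) none ∨ L ≤ (preferredApplicants sPref uPref R u s).ncard

def step : S → Set U :=
  fun s => R s ∪ {u | propose sPref s (R s) = some u ∧ NoRoom L sPref uPref R u s}

def RejectionsJustified : Prop :=
  ∀ s u, u ∈ R s → NoRoom L sPref uPref R u s

def RejectionsUnstable : Prop :=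
  ∀ m, IsStableMatching L sPref uPref m → ∀ s u, u ∈ R s → m s ≠ some u

variable {L sPref uPref R}

section Proposals

variable [Finite U] {s : S} {A : Set U}

theorem propose_spec [IsStrictOrder (Option U) (sPref s)] :
    propose sPref s A ∉ some '' A ∧ ∀ y ∉ some '' A, ¬ sPref s y (propose sPref s A) :=
  Classical.epsilon_spec
    ((Finite.wellFounded_of_trans_of_irrefl (sPref s)).has_min (some '' A)ᶜ ⟨none, by simp⟩)

theorem notMem_of_propose_eq_some [IsStrictOrder (Option U) (sPref s)] {u : U}
    (h : propose sPref s A = some u) : u ∉ A :=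
  fun hu => propose_spec.1 (h ▸ mem_image_of_mem some hu)

theorem propose_eq_or_pref [IsStrictTotalOrder (Option U) (sPref s)] {x : Option U}
    (hx : x ∉ some '' A) : propose sPref s A = x ∨ sPref s (propose sPref s A) x := by
  rcases trichotomous_of (sPref s) (propose sPref s A) x with h | h | h
  · exact Or.inr h
  · exact Or.inl h
  · exact (propose_spec.2 x hx h).elim

theorem pref_none_of_propose_eq_some [IsStrictTotalOrder (Option U) (sPref s)] {u : U}
    (h : propose sPref s A = some u) : sPref s (some u) none := by
  rw [← h]
  exact (propose_eq_or_pref (by simp)).resolve_left (h ▸ Option.some_ne_none u)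

end Proposals

theorem step_eq_of_not_noRoom {t : S} {u : U} (hp : propose sPref t (R t) = some u)
    (h : ¬ NoRoom L sPref uPref R u t) : step L sPref uPref R t = R t := by
  refine union_eq_left.mpr fun u' ⟨hp', hroom⟩ => ?_
  cases Option.some_injective _ (hp.symm.trans hp')
  exact (h hroom).elim

theorem noRoom_step [Finite S] [∀ u, IsStrictOrder (Option S) (uPref u)] {u : U} {s : S}
    (h : NoRoom L sPref uPref R u s) :
    NoRoom L sPref uPref (step L sPref uPref R) u s := by
  refine h.imp_right fun hfull => ?_
  -- the `L` best applicants preferred to `s` keep their proposals to `u`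
  refine (le_ncard_setOf_ncard_below_lt (InvImage (uPref u) some) hfull).trans
    (ncard_le_ncard ?_)
  rintro t ⟨⟨⟨htp, htacc⟩, hts⟩, hrank⟩
  have hpref : preferredApplicants sPref uPref R u t =
      {x ∈ preferredApplicants sPref uPref R u s | InvImage (uPref u) some x t} :=
    ext fun x =>
      ⟨fun ⟨hx, hxt⟩ => ⟨⟨hx, _root_.trans hxt hts⟩, hxt⟩, fun ⟨⟨hx, _⟩, hxt⟩ => ⟨hx, hxt⟩⟩
  have hkeep : step L sPref uPref R t = R t := by
    refine step_eq_of_not_noRoom htp ?_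
    rintro (hunacc | hfull')
    · exact hunacc htacc
    · rw [hpref] at hfull'
      omega
  exact ⟨⟨by rw [hkeep]; exact htp, htacc⟩, hts⟩

theorem rejectionsJustified_step [Finite S] [∀ u, IsStrictOrder (Option S) (uPref u)]
    (hJ : RejectionsJustified L sPref uPref R) :
    RejectionsJustified L sPref uPref (step L sPref uPref R) :=
  fun s u h => noRoom_step (h.elim (hJ s u) And.right)

theorem eq_or_pref_of_rejectionsUnstable [Finite U]
    [∀ s, IsStrictTotalOrder (Option U) (sPref s)] (hI : RejectionsUnstable L sPref uPref R)
    {m : S → Option U} (hm : IsStableMatching L sPref uPref m) (s : S) :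
    propose sPref s (R s) = m s ∨ sPref s (propose sPref s (R s)) (m s) :=
  propose_eq_or_pref fun ⟨u, hu, hmu⟩ => hI m hm s u hu hmu.symm

theorem rejectionsUnstable_step [Finite S] [Finite U]
    [∀ s, IsStrictTotalOrder (Option U) (sPref s)] [∀ u, Std.Irrefl (uPref u)]
    (hI : RejectionsUnstable L sPref uPref R) :
    RejectionsUnstable L sPref uPref (step L sPref uPref R) := by
  intro m hm s u hsu hms
  rcases hsu with h | ⟨-, hunacc | hfull⟩
  · exact hI m hm s u h hms
  · exact hunacc (hm.2.2.1 s u hms)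
  have hsub : insert s (preferredApplicants sPref uPref R u s) ⊆ assignedSet m u := by
    rintro t (rfl | ⟨⟨htp, -⟩, hts⟩)
    · exact hms
    · by_contra hmt
      rcases eq_or_pref_of_rejectionsUnstable hI hm t with h | h
      · exact hmt (htp ▸ h).symm
      · exact hm.2.2.2 t u ⟨htp ▸ h, Or.inr ⟨s, hms, hts⟩⟩
  have hs : s ∉ preferredApplicants sPref uPref R u s := fun h => irrefl_of (uPref u) _ h.2
  have hcard := ncard_le_ncard hsub
  rw [ncard_insert_of_notMem hs] at hcard
  have := hm.1 u
  omega

theorem mem_applicants_of_step_eq [Finite U] [∀ s, IsStrictOrder (Option U) (sPref s)]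
    (hfix : step L sPref uPref R = R) {t : S} {u : U}
    (hp : propose sPref t (R t) = some u) :
    t ∈ applicants sPref uPref R u ∧ (preferredApplicants sPref uPref R u t).ncard < L := by
  have hroom : ¬ NoRoom L sPref uPref R u t := fun h =>
    notMem_of_propose_eq_some hp (congrFun hfix t ▸ Or.inr ⟨hp, h⟩)
  simp only [NoRoom, not_or, not_not, not_le] at hroom
  exact ⟨⟨hp, hroom.1⟩, hroom.2⟩

theorem isMatching_of_step_eq [Finite S] [Finite U] [∀ s, IsStrictOrder (Option U) (sPref s)]
    [∀ u, IsStrictTotalOrder (Option S) (uPref u)] (hfix : step L sPref uPref R = R) :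
    IsMatching L fun s => propose sPref s (R s) := by
  intro u
  have hassigned :
      assignedSet (fun s => propose sPref s (R s)) u = applicants sPref uPref R u :=
    ext fun t => ⟨fun ht => (mem_applicants_of_step_eq hfix ht).1, And.left⟩
  rw [hassigned]
  rcases (applicants sPref uPref R u).eq_empty_or_nonempty with h | h
  · simp [h]
  have := InvImage.trichotomous (r := uPref u) (Option.some_injective S)
  obtain ⟨t, ht, hcard⟩ := exists_ncard_le_ncard_below_add_one (InvImage (uPref u) some) h
  exact hcard.trans (mem_applicants_of_step_eq hfix ht.1).2

theorem not_isBlockingPair_of_step_eq [Finite S] [Finite U]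
    [∀ s, IsStrictOrder (Option U) (sPref s)] [∀ u, IsTrans (Option S) (uPref u)]
    (hJ : RejectionsJustified L sPref uPref R) (hfix : step L sPref uPref R = R)
    (s : S) (u : U) : ¬ IsBlockingPair L sPref uPref (fun s => propose sPref s (R s)) s u := by
  rintro ⟨hsu, hroom⟩
  have hrej : u ∈ R s := by
    by_contra h
    exact propose_spec.2 (some u) (by rwa [(Option.some_injective U).mem_set_image]) hsu
  rcases hroom with ⟨hlt, hacc⟩ | ⟨t, hmt, hst⟩ <;> rcases hJ s u hrej with hunacc | hfull
  · exact hunacc hacc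
  · have hsub : preferredApplicants sPref uPref R u s ⊆
        assignedSet (fun s => propose sPref s (R s)) u := fun t ht => ht.1.1
    have := ncard_le_ncard hsub
    omega
  · exact hunacc (_root_.trans hst (mem_applicants_of_step_eq hfix hmt).1.2)
  · have hsub : preferredApplicants sPref uPref R u s ⊆ preferredApplicants sPref uPref R u t :=
      fun x hx => ⟨hx.1, _root_.trans hx.2 hst⟩
    have := ncard_le_ncard hsub
    have := (mem_applicants_of_step_eq hfix hmt).2
    omega

theorem isStableMatching_of_step_eq [Finite S] [Finite U]
    [∀ s, IsStrictTotalOrder (Option U) (sPref s)]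
    [∀ u, IsStrictTotalOrder (Option S) (uPref u)]
    (hJ : RejectionsJustified L sPref uPref R) (hfix : step L sPref uPref R = R) :
    IsStableMatching L sPref uPref fun s => propose sPref s (R s) :=
  ⟨isMatching_of_step_eq hfix,
    fun _ _ => pref_none_of_propose_eq_some,
    fun _ _ hp => (mem_applicants_of_step_eq hfix hp).1.2,
    not_isBlockingPair_of_step_eq hJ hfix⟩

end DeferredAcceptance

open DeferredAcceptance

theorem exists_student_optimal_stable_matching_general
    {S U : Type*} [Fintype S] [Fintype U]
    (L : ℕ)
    (sPref : S → Option U → Option U → Prop) (uPref : U → Option S → Option S → Prop)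
    (hs : ∀ s, IsStrictTotalOrder (Option U) (sPref s))
    (hu : ∀ u, IsStrictTotalOrder (Option S) (uPref u)) :
    ∃ m : S → Option U, IsStableMatching L sPref uPref m ∧
      ∀ m' : S → Option U, IsStableMatching L sPref uPref m' →
        ∀ s : S, m s = m' s ∨ sPref s (m s) (m' s) := by
  obtain ⟨R, ⟨hJ, hI⟩, hfix⟩ := exists_fixedPoint_of_le_map (f := step L sPref uPref)
    (fun _ _ => subset_union_left)
    (P := fun R => RejectionsJustified L sPref uPref R ∧ RejectionsUnstable L sPref uPref R)
    (fun R h => ⟨rejectionsJustified_step h.1, rejectionsUnstable_step h.2⟩)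
    (x := fun _ => ∅) ⟨fun _ _ h => h.elim, fun _ _ _ _ h => h.elim⟩
  exact ⟨_, isStableMatching_of_step_eq hJ hfix,
    fun _ hm => eq_or_pref_of_rejectionsUnstable hI hm⟩

/-- There exists a student-optimal stable matching: a stable matching `m*` such that
every student weakly prefers her assignment under `m*` to her assignment under any
other stable matching. -/
theorem exists_student_optimal_stable_matching
    {S U : Type*} [Fintype S] [Fintype U]
    (L : ℕ) (hL : 1 ≤ L)
    (sPref : S → Option U → Option U → Prop) (uPref : U → Option S → Option S → Prop)
    (hs : ∀ s, IsStrictTotalOrder (Option U) (sPref s))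
    (hu : ∀ u, IsStrictTotalOrder (Option S) (uPref u)) :
    ∃ m : S → Option U, IsStableMatching L sPref uPref m ∧
      ∀ m' : S → Option U, IsStableMatching L sPref uPref m' →
        ∀ s : S, m s = m' s ∨ sPref s (m s) (m' s) :=
  exists_student_optimal_stable_matching_general L sPref uPref hs hu
end

section
/- In a many-to-one matching market, if a student is unmatched (assigned ⊥) in some stable matching, then she is unmatched in every stable matching. -/
/-!
Suppose `s` is unmatched in the stable matching `m` but matched in the stable matching `m'`, and
let `B` be the set of students who are matched in `m'` and strictly prefer `m'` to `m`; then
`s ∈ B`. Stability of `m` makes every university `u` receiving a student `t ∈ B` in `m'` full in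
`m`, with all its `m`-students ranked above `t`; stability of `m'` then forces every `m`-student
of `u` who leaves `u` in `m'` into `B` as well. Counting the students of `B` university by
university, those who leave such universities in `m'` are at least as many as those who arrive,
so every student of `B` is matched in `m` to one of these universities. This is absurd for `s`.
-/

open Finset

theorem image_subset_image_of_card_fiber_le {α β : Type*} [Fintype α] [DecidableEq α]
    [DecidableEq β] (f g : α → β) (B : Finset α)
    (hmove : ∀ a ∈ B, f a ≠ g a)
    (hcard : ∀ a ∈ B, #{x | f x = f a} ≤ #{x | g x = f a})
    (hclosed : ∀ a ∈ B, ∀ x, g x = f a → f x ≠ f a → x ∈ B) :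
    B.image g ⊆ B.image f := by
  set T := B.image f
  set Y : Finset α := {x | g x ∈ T ∧ f x ≠ g x}
  have hYB : Y ⊆ B := by
    intro x hx
    obtain ⟨hxT, hfx⟩ := (mem_filter.1 hx).2
    obtain ⟨a, ha, hga⟩ := mem_image.1 hxT
    exact hclosed a ha x hga.symm (hga ▸ hfx)
  have hfiber : ∀ b ∈ T, #{x ∈ B | f x = b} ≤ #{x ∈ Y | g x = b} := by
    intro b hb
    obtain ⟨a, ha, rfl⟩ := mem_image.1 hb
    calc #{x ∈ B | f x = f a}
        ≤ #((univ.filter (f · = f a)) \ univ.filter (g · = f a)) := by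
          refine card_le_card fun x hx => ?_
          obtain ⟨hxB, hfx⟩ := mem_filter.1 hx
          simpa [hfx] using (hmove x hxB).symm
      _ ≤ #((univ.filter (g · = f a)) \ univ.filter (f · = f a)) :=
          card_sdiff_le_card_sdiff_iff.2 (hcard a ha)
      _ = #{x ∈ Y | g x = f a} := by
          congr 1
          ext x
          simp only [Y, mem_sdiff, mem_filter, mem_univ, true_and]
          constructor
          · rintro ⟨hgx, hfx⟩
            exact ⟨⟨hgx ▸ hb, hgx ▸ hfx⟩, hgx⟩
          · rintro ⟨⟨-, hfx⟩, hgx⟩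
            exact ⟨hgx, hgx ▸ hfx⟩
  have hBY : #B ≤ #Y :=
    calc #B = ∑ b ∈ T, #{x ∈ B | f x = b} :=
          card_eq_sum_card_fiberwise fun x hx => mem_image_of_mem f hx
      _ ≤ ∑ b ∈ T, #{x ∈ Y | g x = b} := sum_le_sum hfiber
      _ = #Y := (card_eq_sum_card_fiberwise fun x hx => (mem_filter.1 hx).2.1).symm
  rw [← eq_of_subset_of_card_le hYB hBY]
  exact image_subset_iff.2 fun x hx => (mem_filter.1 hx).2.1

section StableMatching

variable {S U : Type*} {L : ℕ} {sPref : S → Option U → Option U → Prop}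
  {uPref : U → Option S → Option S → Prop} {m m' : S → Option U} {t r : S} {u : U}

theorem ncard_assignedSet [Fintype S] [DecidableEq U] (m : S → Option U) (u : U) :
    (assignedSet m u).ncard = #{x | m x = some u} := by
  rw [← Set.ncard_coe_finset]
  congr 1
  ext
  simp [assignedSet]

theorem IsStableMatching.ncard_assignedSet_eq_of_sPref
    (hm : IsStableMatching L sPref uPref m) (hpref : sPref t (some u) (m t))
    (hacc : uPref u (some t) none) : (assignedSet m u).ncard = L :=
  (hm.1 u).antisymm <| not_lt.1 fun hlt => hm.2.2.2 t u ⟨hpref, Or.inl ⟨hlt, hacc⟩⟩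

theorem IsStableMatching.card_fiber_le_of_sPref [Fintype S] [DecidableEq U]
    (hm : IsStableMatching L sPref uPref m) (hm' : IsStableMatching L sPref uPref m')
    (ht : m' t = some u) (hpref : sPref t (some u) (m t)) :
    #{x | m' x = some u} ≤ #{x | m x = some u} := by
  rw [← ncard_assignedSet, ← ncard_assignedSet,
    hm.ncard_assignedSet_eq_of_sPref hpref (hm'.2.2.1 t u ht)]
  exact hm'.1 u

theorem IsStableMatching.uPref_of_sPref [Std.Irrefl (sPref t)]
    [Std.Trichotomous (uPref u)] (hm : IsStableMatching L sPref uPref m)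
    (hpref : sPref t (some u) (m t)) (hr : m r = some u) : uPref u (some r) (some t) := by
  rcases trichotomous_of (uPref u) (some r) (some t) with hlt | heq | hgt
  · exact hlt
  · cases heq
    rw [hr] at hpref
    exact (irrefl _ hpref).elim
  · exact (hm.2.2.2 t u ⟨hpref, Or.inr ⟨r, hr, hgt⟩⟩).elim

theorem IsStableMatching.exists_sPref_of_uPref [Std.Trichotomous (sPref r)]
    (hm' : IsStableMatching L sPref uPref m') (hacc : sPref r (some u) none)
    (ht : m' t = some u) (hrt : uPref u (some r) (some t)) (hr : m' r ≠ some u) :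
    ∃ v, m' r = some v ∧ sPref r (some v) (some u) := by
  have hnb : ¬ sPref r (some u) (m' r) := fun h => hm'.2.2.2 r u ⟨h, Or.inr ⟨t, ht, hrt⟩⟩
  obtain ⟨v, hv⟩ : ∃ v, m' r = some v :=
    Option.ne_none_iff_exists'.1 fun hnone => hnb (by rwa [hnone])
  refine ⟨v, hv, ?_⟩
  rcases trichotomous_of (sPref r) (m' r) (some u) with hlt | heq | hgt
  exacts [hv ▸ hlt, (hr heq).elim, (hnb hgt).elim]

end StableMatching

theorem unmatched_in_all_stable_matchings_general
    {S U : Type*} [Fintype S]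
    (L : ℕ)
    (sPref : S → Option U → Option U → Prop) (uPref : U → Option S → Option S → Prop)
    (hs : ∀ s, IsStrictTotalOrder (Option U) (sPref s))
    (hu : ∀ u, IsStrictTotalOrder (Option S) (uPref u))
    (s : S) (m m' : S → Option U)
    (hm : IsStableMatching L sPref uPref m) (hm' : IsStableMatching L sPref uPref m')
    (h : m s = none) :
    m' s = none := by
  classical
  by_contra hs'
  obtain ⟨u, hsu⟩ := Option.ne_none_iff_exists'.1 hs'
  set B : Finset S := {t | ∃ v, m' t = some v ∧ sPref t (some v) (m t)}
  have hsB : s ∈ B := mem_filter.2 ⟨mem_univ s, u, hsu, h ▸ hm'.2.1 s u hsu⟩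
  have key : B.image m ⊆ B.image m' := by
    refine image_subset_image_of_card_fiber_le m' m B (fun t ht heq => ?_)
      (fun t ht => ?_) (fun t ht r hr hr' => ?_) <;>
      obtain ⟨v, htv, hpref⟩ := (mem_filter.1 ht).2
    · rw [← heq, htv] at hpref
      exact irrefl _ hpref
    · rw [htv]
      exact hm.card_fiber_le_of_sPref hm' htv hpref
    · rw [htv] at hr hr'
      have hrt := hm.uPref_of_sPref hpref hr
      obtain ⟨w, hrw, hpref'⟩ := hm'.exists_sPref_of_uPref (hm.2.1 r v hr) htv hrt hr'
      exact mem_filter.2 ⟨mem_univ r, w, hrw, hr ▸ hpref'⟩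
  obtain ⟨t, ht, hmt⟩ := mem_image.1 (key (mem_image_of_mem m hsB))
  obtain ⟨v, htv, -⟩ := (mem_filter.1 ht).2
  exact Option.some_ne_none v (htv ▸ hmt.trans h)

/-- If a student is unmatched (assigned `⊥`) in some stable matching, then she is
unmatched in every stable matching. -/
theorem unmatched_in_all_stable_matchings
    {S U : Type*} [Fintype S] [Fintype U]
    (L : ℕ) (hL : 1 ≤ L)
    (sPref : S → Option U → Option U → Prop) (uPref : U → Option S → Option S → Prop)
    (hs : ∀ s, IsStrictTotalOrder (Option U) (sPref s))
    (hu : ∀ u, IsStrictTotalOrder (Option S) (uPref u))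
    (s : S) (m m' : S → Option U)
    (hm : IsStableMatching L sPref uPref m) (hm' : IsStableMatching L sPref uPref m')
    (h : m s = none) :
    m' s = none :=
  unmatched_in_all_stable_matchings_general L sPref uPref hs hu s m m' hm hm' h
end

section
/- In a many-to-one matching market, if a university u has at most L stable partners (|S(u)| ≤ L), then in every stable matching u is assigned exactly the set S(u). -/
/-! Let `s₀ ∈ S(u)` be matched to `u` in a stable matching `m'` but not in the stable `m`. Then
`u` is underfilled in `m`, so `s₀` strictly prefers `m` to `m'`. Let `A` be the students strictly
preferring `m` to `m'`. If some `s ∈ A` is matched to `w` in `m`, stability of `m'` makes `w` full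
in `m'` and rank its `m'`-students above `s`, and stability of `m` then puts those of them outside
`m(w)` into `A`; hence `|A ∩ m(w)| ≤ |A ∩ m'(w)|` for every `w`. Summed over `w`, the left side
gives `|A|`, as every student of `A` is matched in `m`, and the right side at most `|A|`, so
equality holds at every `w`. It fails at `u`: `s₀ ∈ A ∩ m'(u)`, while a student of `A ∩ m(u)` would
make `u` full in `m'`, so that `m'(u) = S(u)` would contain this student. -/

section

variable {S U : Type*} {L : ℕ} {sPref : S → Option U → Option U → Prop}
  {uPref : U → Option S → Option S → Prop} {m m' : S → Option U}

def preferring (sPref : S → Option U → Option U → Prop) (m m' : S → Option U) : Set S :=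
  {s | sPref s (m s) (m' s)}

theorem sPref_of_not_isBlockingPair {s : S} {w : U} [Std.Trichotomous (sPref s)]
    (hb : ¬ IsBlockingPair L sPref uPref m s w) (hne : m s ≠ some w)
    (hw : ((assignedSet m w).ncard < L ∧ uPref w (some s) none) ∨
      ∃ t, m t = some w ∧ uPref w (some s) (some t)) :
    sPref s (m s) (some w) := by
  rcases trichotomous_of (sPref s) (m s) (some w) with h | h | h
  · exact h
  · exact absurd h hne
  · exact absurd ⟨h, hw⟩ hb

theorem uPref_of_not_isBlockingPair {s t : S} {w : U} [Std.Trichotomous (uPref w)]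
    (hb : ¬ IsBlockingPair L sPref uPref m s w) (hpref : sPref s (some w) (m s))
    (ht : m t = some w) (hts : t ≠ s) :
    uPref w (some t) (some s) := by
  rcases trichotomous_of (uPref w) (some t) (some s) with h | h | h
  · exact h
  · exact absurd (Option.some_injective _ h) hts
  · exact absurd ⟨hpref, .inr ⟨t, ht, h⟩⟩ hb

theorem sum_ncard_inter_assignedSet [Finite S] [Fintype U] (A : Set S) (m : S → Option U) :
    ∑ w, (A ∩ assignedSet m w).ncard = (A ∩ {s | (m s).isSome}).ncard := by
  have hdisj : Pairwise fun v w => Disjoint (A ∩ assignedSet m v) (A ∩ assignedSet m w) :=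
    fun v w hvw => Set.disjoint_left.2 fun _ hv hw =>
      hvw (Option.some_injective _ (hv.2.symm.trans hw.2))
  rw [← finsum_eq_sum_of_fintype, ← Set.ncard_iUnion_of_finite (fun _ => Set.toFinite _) hdisj]
  congr 1
  ext s
  simp [assignedSet, Option.isSome_iff_exists]

namespace IsStableMatching

theorem assignedSet_subset_stablePartners (hm : IsStableMatching L sPref uPref m) (u : U) :
    assignedSet m u ⊆ stablePartners L sPref uPref u :=
  fun _ hs => ⟨m, hm, hs⟩

theorem assignedSet_eq_stablePartners_of_ncard_eq [Finite S]
    (hm : IsStableMatching L sPref uPref m) {u : U}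
    (hcard : (stablePartners L sPref uPref u).ncard ≤ L) (hfull : (assignedSet m u).ncard = L) :
    assignedSet m u = stablePartners L sPref uPref u :=
  Set.eq_of_subset_of_ncard_le (hm.assignedSet_subset_stablePartners u) (hfull ▸ hcard)

theorem ncard_assignedSet_eq_of_prefers (hm : IsStableMatching L sPref uPref m) {s : S} {w : U}
    (hacc : uPref w (some s) none) (hpref : sPref s (some w) (m s)) :
    (assignedSet m w).ncard = L :=
  le_antisymm (hm.1 w) (not_lt.1 fun hlt => hm.2.2.2 s w ⟨hpref, .inl ⟨hlt, hacc⟩⟩)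

theorem isSome_of_mem_preferring [∀ s, IsStrictOrder (Option U) (sPref s)]
    (hm' : IsStableMatching L sPref uPref m') {s : S} (hs : s ∈ preferring sPref m m') :
    (m s).isSome := by
  change sPref s (m s) (m' s) at hs
  cases hms : m s with
  | some _ => rfl
  | none =>
    rw [hms] at hs
    cases hm's : m' s with
    | none => exact absurd (hm's ▸ hs) (irrefl _)
    | some v => exact absurd (hm'.2.1 s v hm's) (asymm (hm's ▸ hs))

theorem ncard_preferring_inter_assignedSet_le [Finite S]
    [∀ s, IsStrictTotalOrder (Option U) (sPref s)] [∀ w, Std.Trichotomous (uPref w)]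
    (hm : IsStableMatching L sPref uPref m) (hm' : IsStableMatching L sPref uPref m') (w : U) :
    (preferring sPref m m' ∩ assignedSet m w).ncard ≤
      (preferring sPref m m' ∩ assignedSet m' w).ncard := by
  obtain hempty | ⟨s, hsA, hsw⟩ := (preferring sPref m m' ∩ assignedSet m w).eq_empty_or_nonempty
  · rw [hempty, Set.ncard_empty]
    exact Nat.zero_le _
  change m s = some w at hsw
  change sPref s (m s) (m' s) at hsA
  rw [hsw] at hsA
  have hfull : (assignedSet m' w).ncard = L :=
    hm'.ncard_assignedSet_eq_of_prefers (hm.2.2.1 s w hsw) hsA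
  have hsub : preferring sPref m m' ∩ assignedSet m w ⊆ assignedSet m w \ assignedSet m' w := by
    rintro t ⟨htA, htw⟩
    refine ⟨htw, fun ht' => irrefl_of (sPref t) (some w) ?_⟩
    change sPref t (m t) (m' t) at htA
    rwa [htw, ht'] at htA
  have hsup : assignedSet m' w \ assignedSet m w ⊆ preferring sPref m m' ∩ assignedSet m' w := by
    rintro t ⟨ht', ht⟩
    have hts : uPref w (some t) (some s) :=
      uPref_of_not_isBlockingPair (hm'.2.2.2 s w) hsA ht' (by rintro rfl; exact ht hsw)
    refine ⟨?_, ht'⟩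
    change sPref t (m t) (m' t)
    rw [ht']
    exact sPref_of_not_isBlockingPair (hm.2.2.2 t w) ht (.inr ⟨s, hsw, hts⟩)
  calc (preferring sPref m m' ∩ assignedSet m w).ncard
      ≤ (assignedSet m w \ assignedSet m' w).ncard := Set.ncard_le_ncard hsub
    _ ≤ (assignedSet m' w \ assignedSet m w).ncard :=
      (Set.ncard_le_ncard_iff_ncard_sdiff_le_ncard_sdiff).1 (hfull ▸ hm.1 w)
    _ ≤ (preferring sPref m m' ∩ assignedSet m' w).ncard := Set.ncard_le_ncard hsup

theorem ncard_preferring_inter_assignedSet_eq [Finite S] [Fintype U]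
    [∀ s, IsStrictTotalOrder (Option U) (sPref s)] [∀ w, Std.Trichotomous (uPref w)]
    (hm : IsStableMatching L sPref uPref m)
    (hm' : IsStableMatching L sPref uPref m') (w : U) :
    (preferring sPref m m' ∩ assignedSet m w).ncard =
      (preferring sPref m m' ∩ assignedSet m' w).ncard := by
  set A := preferring sPref m m'
  have hle := hm.ncard_preferring_inter_assignedSet_le hm'
  have hsum : ∑ v, (A ∩ assignedSet m' v).ncard ≤ ∑ v, (A ∩ assignedSet m v).ncard := by
    rw [sum_ncard_inter_assignedSet, sum_ncard_inter_assignedSet]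
    calc (A ∩ {s | (m' s).isSome}).ncard ≤ A.ncard := Set.ncard_le_ncard Set.inter_subset_left
      _ = (A ∩ {s | (m s).isSome}).ncard :=
        congr_arg Set.ncard (Set.inter_eq_left.2 fun _ hs => hm'.isSome_of_mem_preferring hs).symm
  exact (Finset.sum_eq_sum_iff_of_le fun v _ => hle v).1
    ((Finset.sum_le_sum fun v _ => hle v).antisymm hsum) w (Finset.mem_univ w)

theorem preferring_inter_assignedSet_eq_empty [Finite S]
    [∀ s, IsStrictTotalOrder (Option U) (sPref s)]
    (hm : IsStableMatching L sPref uPref m) (hm' : IsStableMatching L sPref uPref m') {u : U}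
    (hcard : (stablePartners L sPref uPref u).ncard ≤ L) :
    preferring sPref m m' ∩ assignedSet m u = ∅ := by
  refine Set.eq_empty_of_forall_notMem fun s ⟨hsA, hsu⟩ => ?_
  change sPref s (m s) (m' s) at hsA
  change m s = some u at hsu
  have hfull := hm'.ncard_assignedSet_eq_of_prefers (hm.2.2.1 s u hsu) (hsu ▸ hsA)
  have hs' : m' s = some u := by
    change s ∈ assignedSet m' u
    rw [hm'.assignedSet_eq_stablePartners_of_ncard_eq hcard hfull]
    exact ⟨m, hm, hsu⟩
  rw [hsu, hs'] at hsA
  exact irrefl_of (sPref s) _ hsA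

end IsStableMatching

end

theorem assigned_eq_stablePartners_of_card_le_general
    {S U : Type*} [Fintype S] [Fintype U]
    (L : ℕ) (sPref : S → Option U → Option U → Prop) (uPref : U → Option S → Option S → Prop)
    (hs : ∀ s, IsStrictTotalOrder (Option U) (sPref s))
    (hu : ∀ u, IsStrictTotalOrder (Option S) (uPref u))
    (u : U) (hcard : (stablePartners L sPref uPref u).ncard ≤ L)
    (m : S → Option U) (hm : IsStableMatching L sPref uPref m) :
    assignedSet m u = stablePartners L sPref uPref u := by
  refine (hm.assignedSet_subset_stablePartners u).antisymm fun s₀ ⟨m', hm', hs₀⟩ => ?_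
  by_contra hs₀m
  have hunder : (assignedSet m u).ncard < L :=
    (Set.ncard_lt_ncard ((Set.ssubset_iff_of_subset (hm.assignedSet_subset_stablePartners u)).2
      ⟨s₀, ⟨m', hm', hs₀⟩, hs₀m⟩)).trans_le hcard
  have hs₀A : s₀ ∈ preferring sPref m m' := by
    change sPref s₀ (m s₀) (m' s₀)
    rw [hs₀]
    exact sPref_of_not_isBlockingPair (hm.2.2.2 s₀ u) hs₀m (.inl ⟨hunder, hm'.2.2.1 s₀ u hs₀⟩)
  have hcount := hm.ncard_preferring_inter_assignedSet_eq hm' u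
  rw [hm.preferring_inter_assignedSet_eq_empty hm' hcard, Set.ncard_empty] at hcount
  exact (Set.ncard_pos (s := preferring sPref m m' ∩ assignedSet m' u)).2 ⟨s₀, hs₀A, hs₀⟩ |>.ne hcount

/-- If a university `u` has at most `L` stable partners, then in every stable matching
`u` is assigned exactly the set `S(u)` of its stable partners. -/
theorem assigned_eq_stablePartners_of_card_le
    {S U : Type*} [Fintype S] [Fintype U]
    (L : ℕ) (hL : 1 ≤ L)
    (sPref : S → Option U → Option U → Prop) (uPref : U → Option S → Option S → Prop)
    (hs : ∀ s, IsStrictTotalOrder (Option U) (sPref s))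
    (hu : ∀ u, IsStrictTotalOrder (Option S) (uPref u))
    (u : U) (hcard : (stablePartners L sPref uPref u).ncard ≤ L)
    (m : S → Option U) (hm : IsStableMatching L sPref uPref m) :
    assignedSet m u = stablePartners L sPref uPref u :=
  assigned_eq_stablePartners_of_card_le_general L sPref uPref hs hu u hcard m hm
end

section
/- Let a many-to-one matching market be given on students S ∪ {s₀} and universities U (capacity L, strict preferences: each student over U ∪ {⊥}, each university over S ∪ {s₀} ∪ {⊥}), and let M be a stable matching of the restricted market on students S. Then there exists a stable matching M' of the full market (students S ∪ {s₀}) such that for every university u there is an injection ι from M(u) into M'(u) with the property that u weakly prefers ι(t) to t for every student t ∈ M(u); in particular every university is assigned at least as many students in M' as in M. -/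
/-!
Extend `M` to all students by leaving `s₀` unmatched. This matching is stable except that the
one unmatched student `s` may still be part of blocking pairs. Let `s` join her favourite
university `u` among those she blocks with. If `u` has a free place this gives a stable
matching. Otherwise `u` prefers `s` to one of its students `y`, so it takes `s` in place of `y`,
and now only `y` may block. No university is ever worse off: each step maps its old students
injectively to students it likes at least as much. The sum over matched students of how many
alternatives their university ranks below them strictly increases at each displacement, so
the process ends in a stable matching.
-/

open Function

section Order

variable {α β : Type*}

theorem exists_minimal_of_isStrictOrder [Finite α] (r : β → β → Prop) [IsStrictOrder β r]
    (f : α → β) {X : Set α} (hX : X.Nonempty) :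
    ∃ a ∈ X, ∀ b ∈ X, ¬ r (f b) (f a) := by
  have : IsStrictOrder α (fun a b => r (f a) (f b)) :=
    { irrefl := fun a => irrefl (f a)
      trans := fun _ _ _ => _root_.trans }
  exact (Finite.wellFounded_of_trans_of_irrefl _).has_min X hX

noncomputable def numBeaten (r : α → α → Prop) (a : α) : ℕ := {b | r a b}.ncard

theorem numBeaten_lt_numBeaten [Finite α] {r : α → α → Prop} [IsStrictOrder α r] {a b : α}
    (h : r a b) : numBeaten r b < numBeaten r a := by
  refine Set.ncard_lt_ncard ⟨fun c hc => _root_.trans h hc, fun hsub => ?_⟩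
  exact irrefl b (hsub h)

def Dominates (r : α → α → Prop) (X Y : Set α) : Prop :=
  ∃ ι : X → Y, Function.Injective ι ∧ ∀ x, (ι x : α) = x ∨ r (ι x) x

theorem Dominates.of_subset {r : α → α → Prop} {X Y : Set α} (h : X ⊆ Y) :
    Dominates r X Y :=
  ⟨Set.inclusion h, Set.inclusion_injective h, fun _ => Or.inl rfl⟩

theorem Dominates.trans {r : α → α → Prop} [IsTrans α r] {X Y Z : Set α}
    (h₁ : Dominates r X Y) (h₂ : Dominates r Y Z) : Dominates r X Z := by
  obtain ⟨ι₁, hι₁, hr₁⟩ := h₁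
  obtain ⟨ι₂, hι₂, hr₂⟩ := h₂
  refine ⟨ι₂ ∘ ι₁, hι₂.comp hι₁, fun x => ?_⟩
  rcases hr₁ x with h₁ | h₁ <;> rcases hr₂ (ι₁ x) with h₂ | h₂
  · exact Or.inl (h₂.trans h₁)
  · exact Or.inr (h₁ ▸ h₂)
  · exact Or.inr (h₂ ▸ h₁)
  · exact Or.inr (_root_.trans h₂ h₁)

theorem dominates_insert_diff_singleton {r : α → α → Prop} {X : Set α} {s y : α}
    (hs : s ∉ X) (hy : y ∈ X) (hsy : r s y) : Dominates r X (insert s X \ {y}) := by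
  classical
  have hsy' : s ≠ y := fun h => hs (h ▸ hy)
  refine ⟨fun x => if hx : (x : α) = y then ⟨s, Set.mem_insert s X, hsy'⟩
      else ⟨x, Set.mem_insert_of_mem s x.2, hx⟩, fun a b hab => ?_, fun x => ?_⟩
  · have hab' := congrArg Subtype.val hab
    by_cases ha : (a : α) = y <;> by_cases hb : (b : α) = y <;>
      simp only [ha, hb, dite_true, dite_false] at hab'
    · exact Subtype.ext (ha.trans hb.symm)
    · exact absurd (hab' ▸ b.2) hs
    · exact absurd (hab' ▸ a.2) hs
    · exact Subtype.ext hab'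
  · by_cases hx : (x : α) = y
    · simp only [hx, dite_true]
      exact Or.inr hsy
    · simp only [hx, dite_false, true_or]

theorem Dominates.ncard_le {r : α → α → Prop} {X Y : Set α} [Finite Y]
    (h : Dominates r X Y) : X.ncard ≤ Y.ncard := by
  obtain ⟨ι, hι, -⟩ := h
  rw [← Nat.card_coe_set_eq, ← Nat.card_coe_set_eq]
  exact Nat.card_le_card_of_injective ι hι

theorem Dominates.exists_injective_of_image {r : α → α → Prop} {f : β → α}
    (hf : Function.Injective f) {X : Set β} {Y : Set α} (h : Dominates r (f '' X) Y) :
    ∃ ι : X → Y, Function.Injective ι ∧ ∀ x, (ι x : α) = f x ∨ r (ι x) (f x) := by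
  obtain ⟨ι, hι, hr⟩ := h
  let e : X → f '' X := fun x => ⟨f x, Set.mem_image_of_mem f x.2⟩
  have he : Function.Injective e := fun a b hab =>
    Subtype.ext (hf (congrArg Subtype.val hab))
  exact ⟨ι ∘ e, hι.comp he, fun x => hr (e x)⟩

end Order

section Matching

variable {T U : Type*} {L : ℕ} {sPref : T → Option U → Option U → Prop}
  {uPref : U → Option T → Option T → Prop}

theorem assignedSet_update_of_ne [DecidableEq T] {A : T → Option U} {s : T} {w : Option U}
    {v : U} (hA : A s ≠ some v) (hw : w ≠ some v) :
    assignedSet (update A s w) v = assignedSet A v := by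
  ext t
  rcases eq_or_ne t s with rfl | ht
  · simp [assignedSet, hA, hw]
  · simp [assignedSet, update_of_ne ht]

theorem assignedSet_update_some_self [DecidableEq T] (A : T → Option U) (s : T) (u : U) :
    assignedSet (update A s (some u)) u = insert s (assignedSet A u) := by
  ext t
  rcases eq_or_ne t s with rfl | ht <;> simp [assignedSet, update_of_ne, *]

theorem assignedSet_update_none [DecidableEq T] (A : T → Option U) (y : T) (u : U) :
    assignedSet (update A y none) u = assignedSet A u \ {y} := by
  ext t
  rcases eq_or_ne t y with rfl | ht <;> simp [assignedSet, update_of_ne, *]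

theorem assignedSet_update_some_of_ne [DecidableEq T] {A : T → Option U} {s : T} {u v : U}
    (hs : A s = none) (hv : v ≠ u) : assignedSet (update A s (some u)) v = assignedSet A v :=
  assignedSet_update_of_ne (by simp [hs]) (by simpa using hv.symm)

theorem assignedSet_displace_of_ne [DecidableEq T] {A : T → Option U} {s y : T} {u v : U}
    (hs : A s = none) (hy : A y = some u) (hv : v ≠ u) :
    assignedSet (update (update A s (some u)) y none) v = assignedSet A v := by
  have hsy : y ≠ s := by rintro rfl; simp [hs] at hy
  rw [assignedSet_update_of_ne (by simpa [update_of_ne hsy, hy] using hv.symm) (by simp),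
    assignedSet_update_some_of_ne hs hv]

theorem assignedSet_extend_none {S : Type*} {f : S → T} (hf : Injective f) (m : S → Option U)
    (u : U) : assignedSet (extend f m fun _ => none) u = f '' assignedSet m u := by
  ext t
  by_cases ht : ∃ a, f a = t
  · obtain ⟨a, rfl⟩ := ht
    simp [assignedSet, hf.extend_apply, hf.eq_iff]
  · simp only [assignedSet, Set.mem_ofPred_eq, extend_apply' _ _ _ ht, reduceCtorEq,
      false_iff, Set.mem_image, not_exists, not_and]
    exact fun a _ ha => ht ⟨a, ha⟩

theorem isBlockingPair_of_assignedSet_eq {A A' : T → Option U} {t : T} {v : U}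
    (h : IsBlockingPair L sPref uPref A' t v) (ht : sPref t (some v) (A t))
    (hv : assignedSet A' v = assignedSet A v) : IsBlockingPair L sPref uPref A t v := by
  have hv' : ∀ x, A' x = some v ↔ A x = some v := fun x => Set.ext_iff.1 hv x
  exact ⟨ht, by simpa only [hv, hv'] using h.2⟩

structure IsStableExcept (L : ℕ) (sPref : T → Option U → Option U → Prop)
    (uPref : U → Option T → Option T → Prop) (A : T → Option U) (s : T) : Prop where
  isMatching : IsMatching L A
  student_rational : ∀ t u, A t = some u → sPref t (some u) none
  university_rational : ∀ t u, A t = some u → uPref u (some t) none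
  unmatched : A s = none
  not_isBlockingPair : ∀ t u, t ≠ s → ¬ IsBlockingPair L sPref uPref A t u

def MatchingDominates (uPref : U → Option T → Option T → Prop) (A A' : T → Option U) :
    Prop :=
  ∀ u, Dominates (fun a b => uPref u (some a) (some b)) (assignedSet A u) (assignedSet A' u)

theorem MatchingDominates.refl (A : T → Option U) : MatchingDominates uPref A A :=
  fun _ => .of_subset subset_rfl

theorem MatchingDominates.trans [∀ u, IsTrans (Option T) (uPref u)] {A B C : T → Option U}
    (h₁ : MatchingDominates uPref A B) (h₂ : MatchingDominates uPref B C) :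
    MatchingDominates uPref A C := fun u =>
  have : IsTrans T (fun a b => uPref u (some a) (some b)) := ⟨fun _ _ _ => _root_.trans⟩
  (h₁ u).trans (h₂ u)

noncomputable def welfare [Fintype T] (uPref : U → Option T → Option T → Prop)
    (A : T → Option U) : ℕ :=
  ∑ t, (A t).elim 0 fun u => numBeaten (uPref u) (some t)

theorem welfare_lt_welfare_displace [Fintype T] [DecidableEq T]
    [∀ u, IsStrictOrder (Option T) (uPref u)] {A : T → Option U} {s y : T} {u : U}
    (hs : A s = none) (hy : A y = some u) (hsy : uPref u (some s) (some y)) :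
    welfare uPref A < welfare uPref (update (update A s (some u)) y none) := by
  have hsy' : s ≠ y := by rintro rfl; simp [hs] at hy
  have key : ∀ t, ((update (update A s (some u)) y none) t).elim 0
        (fun v => numBeaten (uPref v) (some t)) +
        (if t = y then numBeaten (uPref u) (some y) else 0) =
      (A t).elim 0 (fun v => numBeaten (uPref v) (some t)) +
        (if t = s then numBeaten (uPref u) (some s) else 0) := by
    intro t
    rcases eq_or_ne t y with rfl | hty
    · simp [hy, hsy'.symm]
    · rcases eq_or_ne t s with rfl | hts <;> simp [update_of_ne, *]
  have hsum := Finset.sum_congr rfl fun t (_ : t ∈ Finset.univ) => key t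
  simp only [Finset.sum_add_distrib, Finset.sum_ite_eq', Finset.mem_univ, if_true] at hsum
  have := numBeaten_lt_numBeaten hsy
  unfold welfare
  omega

theorem matchingDominates_update_some [DecidableEq T] {A : T → Option U} {s : T} {u : U}
    (hs : A s = none) : MatchingDominates uPref A (update A s (some u)) := fun v =>
  .of_subset fun x hx => by
    have hxs : x ≠ s := by rintro rfl; simp [assignedSet, hs] at hx
    simpa [assignedSet, update_of_ne hxs] using hx

theorem matchingDominates_displace [DecidableEq T] {A : T → Option U} {s y : T} {u : U}
    (hs : A s = none) (hy : A y = some u) (hsy : uPref u (some s) (some y)) :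
    MatchingDominates uPref A (update (update A s (some u)) y none) := by
  intro v
  rcases eq_or_ne v u with rfl | hv
  · rw [assignedSet_update_none, assignedSet_update_some_self]
    exact dominates_insert_diff_singleton (by simp [assignedSet, hs]) hy hsy
  · rw [assignedSet_displace_of_ne hs hy hv]
    exact .of_subset subset_rfl

end Matching

section Steps

variable {T U : Type*} {L : ℕ} {sPref : T → Option U → Option U → Prop}
  {uPref : U → Option T → Option T → Prop} {A : T → Option U} {s : T} {u : U}

theorem IsStableExcept.isStableMatching (hA : IsStableExcept L sPref uPref A s)
    (hs : ∀ u, ¬ IsBlockingPair L sPref uPref A s u) : IsStableMatching L sPref uPref A := by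
  refine ⟨hA.isMatching, hA.student_rational, hA.university_rational, fun t v => ?_⟩
  rcases eq_or_ne t s with rfl | ht
  · exact hs v
  · exact hA.not_isBlockingPair t v ht

/-- The universities `s` prefers to `u` have kept their students, so she would already have
blocked with them before moving. -/
theorem not_isBlockingPair_of_favourite [∀ t, IsStrictOrder (Option U) (sPref t)]
    (hb : IsBlockingPair L sPref uPref A s u)
    (hfav : ∀ v, IsBlockingPair L sPref uPref A s v → ¬ sPref s (some v) (some u))
    {A' : T → Option U} (hs : A' s = some u)
    (hA' : ∀ v ≠ u, assignedSet A' v = assignedSet A v) (v : U) :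
    ¬ IsBlockingPair L sPref uPref A' s v := by
  intro hb'
  have hvu : sPref s (some v) (some u) := hs ▸ hb'.1
  have hne : v ≠ u := by rintro rfl; exact irrefl _ hvu
  exact hfav v (isBlockingPair_of_assignedSet_eq hb' (_root_.trans hvu hb.1) (hA' v hne)) hvu

theorem IsStableExcept.isStableMatching_update [DecidableEq T] [Finite T]
    [∀ t, IsStrictOrder (Option U) (sPref t)] [∀ u, IsStrictOrder (Option T) (uPref u)]
    (hA : IsStableExcept L sPref uPref A s) (hb : IsBlockingPair L sPref uPref A s u)
    (hfav : ∀ v, IsBlockingPair L sPref uPref A s v → ¬ sPref s (some v) (some u))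
    (hroom : (assignedSet A u).ncard < L) :
    IsStableMatching L sPref uPref (update A s (some u)) := by
  have hsu : uPref u (some s) none := by
    rcases hb.2 with ⟨-, h⟩ | ⟨x, hx, hsx⟩
    · exact h
    · exact _root_.trans hsx (hA.university_rational x u hx)
  have hAs : update A s (some u) s = some u := update_self ..
  have hAt : ∀ t ≠ s, update A s (some u) t = A t := fun t ht => update_of_ne ht ..
  have hAu := assignedSet_update_some_self A s u
  have hAv : ∀ v ≠ u, assignedSet (update A s (some u)) v = assignedSet A v := fun v hv =>
    assignedSet_update_some_of_ne hA.unmatched hv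
  have hsA : s ∉ assignedSet A u := by simp [assignedSet, hA.unmatched]
  refine ⟨fun v => ?_, fun t v htv => ?_, fun t v htv => ?_, fun t v hb' => ?_⟩
  · rcases eq_or_ne v u with rfl | hv
    · rw [hAu, Set.ncard_insert_of_notMem hsA]
      omega
    · rw [hAv v hv]
      exact hA.isMatching v
  · rcases eq_or_ne t s with rfl | ht
    · obtain rfl := Option.some_inj.1 (hAs.symm.trans htv)
      simpa [hA.unmatched] using hb.1
    · exact hA.student_rational t v (hAt t ht ▸ htv)
  · rcases eq_or_ne t s with rfl | ht
    · obtain rfl := Option.some_inj.1 (hAs.symm.trans htv)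
      exact hsu
    · exact hA.university_rational t v (hAt t ht ▸ htv)
  · rcases eq_or_ne t s with rfl | ht
    · exact not_isBlockingPair_of_favourite hb hfav hAs hAv v hb'
    have h₁ : sPref t (some v) (A t) := hAt t ht ▸ hb'.1
    rcases eq_or_ne v u with rfl | hv
    · refine hA.not_isBlockingPair t v ht ⟨h₁, ?_⟩
      rcases hb'.2 with ⟨-, htv⟩ | ⟨x, hx, htx⟩
      · exact Or.inl ⟨hroom, htv⟩
      · rcases (hAu ▸ hx : x ∈ insert s (assignedSet A v)) with rfl | hx
        · exact Or.inl ⟨hroom, _root_.trans htx hsu⟩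
        · exact Or.inr ⟨x, hx, htx⟩
    · exact hA.not_isBlockingPair t v ht (isBlockingPair_of_assignedSet_eq hb' h₁ (hAv v hv))

theorem IsStableExcept.displace [DecidableEq T] [Finite T]
    [∀ t, IsStrictOrder (Option U) (sPref t)] [∀ u, IsStrictOrder (Option T) (uPref u)]
    (hA : IsStableExcept L sPref uPref A s) (hb : IsBlockingPair L sPref uPref A s u)
    (hfav : ∀ v, IsBlockingPair L sPref uPref A s v → ¬ sPref s (some v) (some u))
    (hfull : L ≤ (assignedSet A u).ncard) {y : T} (hy : A y = some u)
    (hsy : uPref u (some s) (some y)) :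
    IsStableExcept L sPref uPref (update (update A s (some u)) y none) y := by
  have hsy' : s ≠ y := by rintro rfl; simp [hA.unmatched] at hy
  have hAs : update (update A s (some u)) y none s = some u := by simp [update_of_ne hsy']
  have hAt : ∀ t ≠ s, t ≠ y → update (update A s (some u)) y none t = A t :=
    fun t hts hty => by simp [update_of_ne hts, update_of_ne hty]
  have hAu : assignedSet (update (update A s (some u)) y none) u =
      insert s (assignedSet A u) \ {y} := by
    rw [assignedSet_update_none, assignedSet_update_some_self]
  have hAv : ∀ v ≠ u, assignedSet (update (update A s (some u)) y none) v =
      assignedSet A v := fun v hv => assignedSet_displace_of_ne hA.unmatched hy hv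
  have hcard : (assignedSet (update (update A s (some u)) y none) u).ncard =
      (assignedSet A u).ncard := by
    have hsA : s ∉ assignedSet A u := by simp [assignedSet, hA.unmatched]
    rw [hAu, Set.ncard_sdiff_singleton_of_mem (Set.mem_insert_of_mem s hy),
      Set.ncard_insert_of_notMem hsA, Nat.add_sub_cancel]
  refine ⟨fun v => ?_, fun t v htv => ?_, fun t v htv => ?_, update_self .., ?_⟩
  · rcases eq_or_ne v u with rfl | hv
    · exact hcard ▸ hA.isMatching v
    · exact hAv v hv ▸ hA.isMatching v
  · rcases eq_or_ne t s with rfl | hts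
    · obtain rfl := Option.some_inj.1 (hAs.symm.trans htv)
      simpa [hA.unmatched] using hb.1
    rcases eq_or_ne t y with rfl | hty
    · simp at htv
    · exact hA.student_rational t v (hAt t hts hty ▸ htv)
  · rcases eq_or_ne t s with rfl | hts
    · obtain rfl := Option.some_inj.1 (hAs.symm.trans htv)
      exact _root_.trans hsy (hA.university_rational y _ hy)
    rcases eq_or_ne t y with rfl | hty
    · simp at htv
    · exact hA.university_rational t v (hAt t hts hty ▸ htv)
  · intro t v hty hb'
    rcases eq_or_ne t s with rfl | hts
    · exact not_isBlockingPair_of_favourite hb hfav hAs hAv v hb'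
    have h₁ : sPref t (some v) (A t) := hAt t hts hty ▸ hb'.1
    rcases eq_or_ne v u with rfl | hv
    · refine hA.not_isBlockingPair t v hts ⟨h₁, ?_⟩
      rcases hb'.2 with ⟨hlt, -⟩ | ⟨x, hx, htx⟩
      · omega
      · rcases (hAu ▸ hx : x ∈ insert s (assignedSet A v) \ {y}) with ⟨rfl | hx, -⟩
        · exact Or.inr ⟨y, hy, _root_.trans htx hsy⟩
        · exact Or.inr ⟨x, hx, htx⟩
    · exact hA.not_isBlockingPair t v hts (isBlockingPair_of_assignedSet_eq hb' h₁ (hAv v hv))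

end Steps

section Main

variable {T U : Type*} {L : ℕ} {sPref : T → Option U → Option U → Prop}
  {uPref : U → Option T → Option T → Prop}

/-- Instead of running the displacement chain, take a reachable state of maximal welfare: it
admits no displacement step. -/
theorem IsStableExcept.exists_isStableMatching_matchingDominates [Fintype T] [Finite U]
    [∀ t, IsStrictOrder (Option U) (sPref t)] [∀ u, IsStrictOrder (Option T) (uPref u)]
    {A : T → Option U} {s : T} (hA : IsStableExcept L sPref uPref A s) :
    ∃ A', IsStableMatching L sPref uPref A' ∧ MatchingDominates uPref A A' := by
  classical
  let C : Set ((T → Option U) × T) :=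
    {p | IsStableExcept L sPref uPref p.1 p.2 ∧ MatchingDominates uPref A p.1}
  obtain ⟨⟨B, b⟩, ⟨hB, hAB⟩, hBmax⟩ :=
    Set.exists_max_image C (fun p => welfare uPref p.1) C.toFinite ⟨(A, s), hA, .refl A⟩
  by_cases hblock : ∃ u, IsBlockingPair L sPref uPref B b u
  swap
  · exact ⟨B, hB.isStableMatching fun u hu => hblock ⟨u, hu⟩, hAB⟩
  obtain ⟨u, hu, hfav⟩ := exists_minimal_of_isStrictOrder (sPref b) some hblock
  by_cases hroom : (assignedSet B u).ncard < L
  · exact ⟨_, hB.isStableMatching_update hu hfav hroom,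
      hAB.trans (matchingDominates_update_some hB.unmatched)⟩
  obtain ⟨y, hy, hby⟩ := hu.2.resolve_left fun h => hroom h.1
  have hnext : (update (update B b (some u)) y none, y) ∈ C :=
    ⟨hB.displace hu hfav (not_lt.1 hroom) hy hby,
      hAB.trans (matchingDominates_displace hB.unmatched hy hby)⟩
  exact absurd (hBmax _ hnext) (not_le.2 (welfare_lt_welfare_displace hB.unmatched hy hby))

theorem isStableExcept_extend_none {s₀ : T} {m : {t : T // t ≠ s₀} → Option U}
    (hm : IsStableMatching L (fun s => sPref s.val)
      (fun u a b => uPref u (a.map Subtype.val) (b.map Subtype.val)) m) :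
    IsStableExcept L sPref uPref (extend Subtype.val m fun _ => none) s₀ := by
  obtain ⟨hcap, hsIR, huIR, hstable⟩ := hm
  have hval : ∀ x, extend Subtype.val m (fun _ => none) x.val = m x :=
    Subtype.val_injective.extend_apply _ _
  have hs₀ : extend Subtype.val m (fun _ => none) s₀ = none :=
    extend_apply' _ _ _ fun ⟨x, hx⟩ => x.2 hx
  have hcard : ∀ u, (assignedSet (extend Subtype.val m fun _ => none) u).ncard =
      (assignedSet m u).ncard := fun u => by
    rw [assignedSet_extend_none Subtype.val_injective,
      Set.ncard_image_of_injective _ Subtype.val_injective]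
  have hne : ∀ t u, extend Subtype.val m (fun _ => none) t = some u → t ≠ s₀ := by
    rintro t u h rfl
    simp only [hs₀, reduceCtorEq] at h
  refine ⟨fun u => hcard u ▸ hcap u, fun t u htu => ?_, fun t u htu => ?_, hs₀,
    fun t u ht hb => ?_⟩
  · lift t to {t : T // t ≠ s₀} using hne t u htu
    exact hsIR t u (hval t ▸ htu)
  · lift t to {t : T // t ≠ s₀} using hne t u htu
    simpa using huIR t u (hval t ▸ htu)
  · lift t to {t : T // t ≠ s₀} using ht
    refine hstable t u ⟨hval t ▸ hb.1, ?_⟩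
    rcases hb.2 with ⟨hlt, hacc⟩ | ⟨x, hx, hux⟩
    · exact Or.inl ⟨hcard u ▸ hlt, by simpa using hacc⟩
    · lift x to {t : T // t ≠ s₀} using hne x u hx
      exact Or.inr ⟨x, hval x ▸ hx, by simpa using hux⟩

end Main

theorem exists_stable_matching_with_extra_student_general
    {T U : Type*} [Fintype T] [Fintype U] (s₀ : T)
    (L : ℕ)
    (sPref : T → Option U → Option U → Prop) (uPref : U → Option T → Option T → Prop)
    (hs : ∀ s, IsStrictTotalOrder (Option U) (sPref s))
    (hu : ∀ u, IsStrictTotalOrder (Option T) (uPref u))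
    (m : {t : T // t ≠ s₀} → Option U)
    (hm : IsStableMatching L (fun s => sPref s.val)
      (fun u a b => uPref u (a.map Subtype.val) (b.map Subtype.val)) m) :
    ∃ m' : T → Option U, IsStableMatching L sPref uPref m' ∧
      ∀ u : U,
        (∃ ι : assignedSet m u → assignedSet m' u, Function.Injective ι ∧
          ∀ t : assignedSet m u,
            ((ι t : T) = ((t : {t : T // t ≠ s₀}) : T) ∨
              uPref u (some (ι t : T)) (some ((t : {t : T // t ≠ s₀}) : T)))) ∧
        (assignedSet m u).ncard ≤ (assignedSet m' u).ncard := by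
  have := fun s => (hs s).toIsStrictOrder
  have := fun u => (hu u).toIsStrictOrder
  obtain ⟨m', hm', hdom⟩ :=
    (isStableExcept_extend_none hm).exists_isStableMatching_matchingDominates
  refine ⟨m', hm', fun u => ?_⟩
  have hdom_u := hdom u
  rw [assignedSet_extend_none Subtype.val_injective] at hdom_u
  refine ⟨hdom_u.exists_injective_of_image Subtype.val_injective, ?_⟩
  simpa [Set.ncard_image_of_injective _ Subtype.val_injective] using hdom_u.ncard_le

/-- Adding a student to the market: if `M` is a stable matching of the market
restricted to the students other than `s₀`, then there is a stable matching `M'` of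
the full market in which, for every university `u`, there is an injection `ι` from
`M(u)` into `M'(u)` such that `u` weakly prefers `ι t` to `t` for every `t ∈ M(u)`;
in particular every university is assigned at least as many students in `M'`. -/
theorem exists_stable_matching_with_extra_student
    {T U : Type*} [Fintype T] [Fintype U] (s₀ : T)
    (L : ℕ) (hL : 1 ≤ L)
    (sPref : T → Option U → Option U → Prop) (uPref : U → Option T → Option T → Prop)
    (hs : ∀ s, IsStrictTotalOrder (Option U) (sPref s))
    (hu : ∀ u, IsStrictTotalOrder (Option T) (uPref u))
    (m : {t : T // t ≠ s₀} → Option U)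
    (hm : IsStableMatching L (fun s => sPref s.val)
      (fun u a b => uPref u (a.map Subtype.val) (b.map Subtype.val)) m) :
    ∃ m' : T → Option U, IsStableMatching L sPref uPref m' ∧
      ∀ u : U,
        (∃ ι : assignedSet m u → assignedSet m' u, Function.Injective ι ∧
          ∀ t : assignedSet m u,
            ((ι t : T) = ((t : {t : T // t ≠ s₀}) : T) ∨
              uPref u (some (ι t : T)) (some ((t : {t : T // t ≠ s₀}) : T)))) ∧
        (assignedSet m u).ncard ≤ (assignedSet m' u).ncard :=
  exists_stable_matching_with_extra_student_general s₀ L sPref uPref hs hu m hm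
end

section
/- Fix a real number M > 0 and an integer K ≥ 1. The function s ↦ 1 − (1 − M(1 − e^{−s/M})/s)^K is strictly decreasing on (0, ∞), and its values lie in the open interval (0, 1) for every s > 0 (note that M(1 − e^{−s/M})/s ∈ (0,1) for all s > 0). -/
/-!
Substituting `t = -s/M`, the quantity `M(1 - e^{-s/M})/s` is the slope `(e^t - 1)/t` of the
secant of `exp` through `0` and `t < 0`. Strict convexity of `exp` makes this slope strictly
increasing in `t`, hence strictly decreasing in `s`; it is positive since `exp` is increasing
and below `1 = exp' 0` since `1 + t < e^t`. Finally `x ↦ 1 - (1 - x)^K` is strictly increasing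
on `x ≤ 1` and maps `(0, 1)` into itself.
-/

open Real Set

lemma mul_one_sub_exp_neg_div_div_eq_slope (M s : ℝ) :
    M * (1 - exp (-s / M)) / s = slope exp 0 (-s / M) := by
  rw [slope_def_field, exp_zero, sub_zero]
  rcases eq_or_ne M 0 with rfl | hM
  · simp
  rcases eq_or_ne s 0 with rfl | hs
  · simp
  field_simp
  ring

lemma slope_exp_zero_strictMonoOn : StrictMonoOn (slope exp 0) (Iio 0) := by
  intro x hx y hy hxy
  simpa only [slope_def_field] using
    strictConvexOn_exp.secant_strict_mono (mem_univ 0) (mem_univ x) (mem_univ y)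
      (ne_of_lt hx) (ne_of_lt hy) hxy

lemma slope_exp_zero_mem_Ioo {t : ℝ} (ht : t < 0) : slope exp 0 t ∈ Ioo 0 1 := by
  rw [slope_def_field, exp_zero, sub_zero]
  have hexp : exp t < 1 := exp_lt_one_iff.mpr ht
  have htangent : t + 1 < exp t := add_one_lt_exp ht.ne
  exact ⟨div_pos_of_neg_of_neg (by linarith) ht, (div_lt_one_of_neg ht).mpr (by linarith)⟩

lemma one_sub_one_sub_pow_strictMonoOn {K : ℕ} (hK : K ≠ 0) :
    StrictMonoOn (fun x : ℝ => 1 - (1 - x) ^ K) (Iic 1) := by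
  intro x _ y hy hxy
  have : (1 - y) ^ K < (1 - x) ^ K :=
    pow_lt_pow_left₀ (by linarith) (sub_nonneg.mpr hy) hK
  simpa only [sub_lt_sub_iff_left] using this

lemma one_sub_one_sub_pow_mem_Ioo {x : ℝ} (hx : x ∈ Ioo 0 1) {K : ℕ} (hK : K ≠ 0) :
    1 - (1 - x) ^ K ∈ Ioo 0 1 := by
  obtain ⟨hx₀, hx₁⟩ := hx
  have hpos : 0 < (1 - x) ^ K := pow_pos (by linarith) K
  have hlt : (1 - x) ^ K < 1 := pow_lt_one₀ (by linarith) (by linarith) hK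
  exact ⟨by linarith, by linarith⟩

/-- For `M > 0` and an integer `K ≥ 1`, the function
`s ↦ 1 - (1 - M(1 - e^{-s/M})/s)^K` is strictly decreasing on `(0, ∞)` and takes
values in `(0, 1)` for every `s > 0`; moreover `M(1 - e^{-s/M})/s ∈ (0, 1)` for
every `s > 0`. -/
theorem acceptance_fraction_strictAnti_mem_Ioo
    (M : ℝ) (hM : 0 < M) (K : ℕ) (hK : 1 ≤ K) :
    (∀ s : ℝ, 0 < s → M * (1 - Real.exp (-s / M)) / s ∈ Set.Ioo (0 : ℝ) 1) ∧
    StrictAntiOn (fun s : ℝ => 1 - (1 - M * (1 - Real.exp (-s / M)) / s) ^ K)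
      (Set.Ioi 0) ∧
    ∀ s : ℝ, 0 < s →
      (1 - (1 - M * (1 - Real.exp (-s / M)) / s) ^ K) ∈ Set.Ioo (0 : ℝ) 1 := by
  have hK₀ : K ≠ 0 := by omega
  have hmaps : MapsTo (fun s : ℝ => -s / M) (Ioi 0) (Iio 0) := fun s hs =>
    div_neg_of_neg_of_pos (neg_neg_iff_pos.mpr hs) hM
  have hanti : StrictAntiOn (fun s : ℝ => -s / M) (Ioi 0) := fun a _ b _ hab => by
    simp only
    gcongr
  have hmem (s : ℝ) (hs : 0 < s) : M * (1 - exp (-s / M)) / s ∈ Ioo 0 1 := by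
    rw [mul_one_sub_exp_neg_div_div_eq_slope]
    exact slope_exp_zero_mem_Ioo (hmaps hs)
  have hfrac : StrictAntiOn (fun s : ℝ => M * (1 - exp (-s / M)) / s) (Ioi 0) := by
    simp only [mul_one_sub_exp_neg_div_div_eq_slope]
    exact slope_exp_zero_strictMonoOn.comp_strictAntiOn hanti hmaps
  refine ⟨hmem, ?_, fun s hs => one_sub_one_sub_pow_mem_Ioo (hmem s hs) hK₀⟩
  exact (one_sub_one_sub_pow_strictMonoOn hK₀).comp_strictAntiOn hfrac
    fun s hs => (hmem s hs).2.le
end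

section
/- Fix a real number M > 0 and an integer K ≥ 1. There exists a unique real number s > 0 satisfying M(1 − e^{−s/M}) = 1 − (1 − M(1 − e^{−s/M})/s)^K. -/
/-!
Write `g s = M (1 - e^{-s/M})`, so the equation reads `F s = 1` for
`F s = g s + (1 - g s / s)^K`. Since `g` is increasing and strictly concave with `g 0 = 0`, both
`g s` and `1 - g s / s ∈ (0, 1)` increase with `s`, hence `F` is strictly increasing on `s > 0`.
For `s < 1`, `(1 - g s / s)^K ≤ 1 - g s / s` gives `F s ≤ 1 - g s (1/s - 1) < 1`; for `s > K`,
Bernoulli's inequality gives `F s ≥ 1 + g s (1 - K/s) > 1`. The intermediate value theorem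
finishes the proof.
-/

open Real Set

noncomputable section

/-- `g(sn, M, 1) / n` in the paper's notation. -/
def acceptedPerStudent (M s : ℝ) : ℝ := M * (1 - exp (-s / M))

def fixedPointMap (M : ℝ) (K : ℕ) (s : ℝ) : ℝ :=
  acceptedPerStudent M s + (1 - acceptedPerStudent M s / s) ^ K

end

namespace acceptedPerStudent

variable {M : ℝ}

@[simp] lemma zero_right : acceptedPerStudent M 0 = 0 := by simp [acceptedPerStudent]

lemma continuous : Continuous (acceptedPerStudent M) := by
  unfold acceptedPerStudent; fun_prop

lemma strictMono (hM : 0 < M) : StrictMono (acceptedPerStudent M) := fun x y hxy => by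
  have : exp (-y / M) < exp (-x / M) := exp_lt_exp.2 (by gcongr)
  unfold acceptedPerStudent; gcongr

lemma pos (hM : 0 < M) {s : ℝ} (hs : 0 < s) : 0 < acceptedPerStudent M s := by
  simpa using strictMono hM hs

lemma lt_self (hM : 0 < M) {s : ℝ} (hs : 0 < s) : acceptedPerStudent M s < s := by
  have h := add_one_lt_exp (div_neg_of_neg_of_pos (neg_neg_of_pos hs) hM).ne
  have : M * (-s / M) = -s := by field_simp
  unfold acceptedPerStudent; nlinarith

lemma strictConcaveOn (hM : 0 < M) : StrictConcaveOn ℝ univ (acceptedPerStudent M) := by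
  refine ⟨convex_univ, fun x _ y _ hxy a b ha hb hab => ?_⟩
  have hexp := strictConvexOn_exp.2 (mem_univ (-x / M)) (mem_univ (-y / M))
    (by rwa [Ne, div_left_inj' hM.ne', neg_inj]) ha hb hab
  have harg : a • (-x / M) + b • (-y / M) = -(a • x + b • y) / M := by
    simp only [smul_eq_mul]; ring
  rw [harg] at hexp
  simp only [acceptedPerStudent, smul_eq_mul] at hexp ⊢
  nlinarith

lemma div_self_strictAntiOn (hM : 0 < M) :
    StrictAntiOn (fun s => acceptedPerStudent M s / s) (Ioi 0) := fun x hx y _ hxy => by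
  simpa using (strictConcaveOn hM).secant_strict_mono (mem_univ 0) (mem_univ x) (mem_univ y)
    (ne_of_gt hx) (ne_of_gt (lt_trans hx hxy)) hxy

lemma div_self_mem_Ioo (hM : 0 < M) {s : ℝ} (hs : 0 < s) :
    acceptedPerStudent M s / s ∈ Ioo 0 1 :=
  ⟨div_pos (pos hM hs) hs, (div_lt_one hs).2 (lt_self hM hs)⟩

end acceptedPerStudent

namespace fixedPointMap

open acceptedPerStudent

variable {M : ℝ} {K : ℕ}

lemma eq_one_iff {s : ℝ} : fixedPointMap M K s = 1 ↔
    acceptedPerStudent M s = 1 - (1 - acceptedPerStudent M s / s) ^ K := by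
  unfold fixedPointMap
  constructor <;> intro h <;> linarith

lemma continuousOn : ContinuousOn (fixedPointMap M K) (Ioi 0) := by
  have hdiv : ContinuousOn (fun s => acceptedPerStudent M s / s) (Ioi 0) :=
    continuous.continuousOn.div continuousOn_id fun _ hs => ne_of_gt hs
  exact continuous.continuousOn.add ((continuousOn_const.sub hdiv).pow K)

lemma strictMonoOn (hM : 0 < M) : StrictMonoOn (fixedPointMap M K) (Ioi 0) :=
  fun x hx y hy hxy => by
    have hpow : (1 - acceptedPerStudent M x / x) ^ K ≤ (1 - acceptedPerStudent M y / y) ^ K :=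
      pow_le_pow_left₀ (sub_nonneg.2 (div_self_mem_Ioo hM hx).2.le)
        (sub_le_sub_left (div_self_strictAntiOn hM hx hy hxy).le 1) K
    exact add_lt_add_of_lt_of_le (strictMono hM hxy) hpow

lemma lt_one (hM : 0 < M) (hK : K ≠ 0) {s : ℝ} (hs : 0 < s) (hs₁ : s < 1) :
    fixedPointMap M K s < 1 := by
  obtain ⟨hu₀, hu₁⟩ := div_self_mem_Ioo hM hs
  have hpow : (1 - acceptedPerStudent M s / s) ^ K ≤ 1 - acceptedPerStudent M s / s :=
    pow_le_of_le_one (by linarith) (by linarith) hK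
  have hgt : acceptedPerStudent M s < acceptedPerStudent M s / s :=
    (lt_div_iff₀ hs).2 (mul_lt_of_lt_one_right (pos hM hs) hs₁)
  unfold fixedPointMap; linarith

lemma one_lt (hM : 0 < M) {s : ℝ} (hKs : K < s) : 1 < fixedPointMap M K s := by
  have hs : 0 < s := lt_of_le_of_lt K.cast_nonneg hKs
  obtain ⟨hu₀, hu₁⟩ := div_self_mem_Ioo hM hs
  have hbernoulli : 1 - K * (acceptedPerStudent M s / s) ≤
      (1 - acceptedPerStudent M s / s) ^ K := by
    simpa only [mul_neg, ← sub_eq_add_neg] using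
      one_add_mul_le_pow (a := -(acceptedPerStudent M s / s)) (by linarith) K
  have hlt : K * (acceptedPerStudent M s / s) < acceptedPerStudent M s := by
    rw [mul_div_assoc', div_lt_iff₀ hs]
    exact mul_comm s _ ▸ mul_lt_mul_of_pos_right hKs (pos hM hs)
  unfold fixedPointMap; linarith

end fixedPointMap

/-- For `M > 0` and an integer `K ≥ 1`, there is a unique `s > 0` satisfying the
fixed-point equation `M(1 - e^{-s/M}) = 1 - (1 - M(1 - e^{-s/M})/s)^K`. -/
theorem existsUnique_fixed_point (M : ℝ) (hM : 0 < M) (K : ℕ) (hK : 1 ≤ K) :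
    ∃! s : ℝ, 0 < s ∧
      M * (1 - Real.exp (-s / M)) =
        1 - (1 - M * (1 - Real.exp (-s / M)) / s) ^ K := by
  show ∃! s : ℝ, 0 < s ∧
    acceptedPerStudent M s = 1 - (1 - acceptedPerStudent M s / s) ^ K
  simp only [← fixedPointMap.eq_one_iff]
  have hIcc : Icc (1 / 2 : ℝ) (K + 1) ⊆ Ioi 0 := fun s hs => lt_of_lt_of_le one_half_pos hs.1
  obtain ⟨s, hs, hs_eq⟩ : ∃ s ∈ Icc (1 / 2 : ℝ) (K + 1), fixedPointMap M K s = 1 :=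
    intermediate_value_Icc (by linarith [K.cast_nonneg (α := ℝ)])
      (fixedPointMap.continuousOn.mono hIcc)
      ⟨(fixedPointMap.lt_one hM (by omega) one_half_pos one_half_lt_one).le,
        (fixedPointMap.one_lt hM (lt_add_one _)).le⟩
  refine ⟨s, ⟨hIcc hs, hs_eq⟩, fun t ⟨ht, ht_eq⟩ => ?_⟩
  exact (fixedPointMap.strictMonoOn hM).injOn ht (hIcc hs) (ht_eq.trans hs_eq.symm)
end

section
/- Fix a real number M > 0. For each integer K ≥ 1 let s(K) denote the unique positive real solution of M(1 − e^{−s/M}) = 1 − (1 − M(1 − e^{−s/M})/s)^K. Then s(K) is strictly increasing in K: s(K+1) > s(K) for every K ≥ 1. -/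
/-!
Write `f u = M (1 - e^{-u/M})` and `p u = f u / u ∈ (0, 1)`. Suppose `t ≤ s`. Since `f` is
increasing, `f t ≤ f s`; since `f` is concave with `f 0 = 0`, its chord slope `p` is antitone,
so `p s ≤ p t`. Hence
`f s = 1 - (1 - p s)^K < 1 - (1 - p s)^(K+1) ≤ 1 - (1 - p t)^(K+1) = f t`, a contradiction.
-/

open Real Set

lemma ConcaveOn.antitoneOn_div_self {g : ℝ → ℝ} (hg : ConcaveOn ℝ (Ici 0) g) (h0 : g 0 = 0) :
    AntitoneOn (fun x => g x / x) (Ioi 0) := by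
  intro x hx y hy hxy
  have h := hg.neg.secant_mono self_mem_Ici (Ioi_subset_Ici_self hx) (Ioi_subset_Ici_self hy)
    (ne_of_gt hx) (ne_of_gt hy) hxy
  simp only [Pi.neg_apply, h0, neg_zero, sub_zero, neg_div] at h
  exact neg_le_neg_iff.mp h

noncomputable def expSaturation (M u : ℝ) : ℝ := M * (1 - exp (-u / M))

namespace expSaturation

variable {M : ℝ}

lemma concaveOn (hM : 0 ≤ M) : ConcaveOn ℝ univ (expSaturation M) := by
  have h : ConvexOn ℝ univ (fun u => exp (-u / M)) := by
    convert! convexOn_exp.comp_linearMap (LinearMap.mul ℝ ℝ (-M⁻¹)) using 1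
    ext u
    simp [div_eq_inv_mul]
  convert! (h.neg.add_const 1).smul hM using 1
  ext u
  simp [expSaturation, sub_eq_neg_add]

lemma monotone (hM : 0 ≤ M) : Monotone (expSaturation M) := by
  intro u v huv
  unfold expSaturation
  gcongr

lemma antitoneOn_div_self (hM : 0 ≤ M) :
    AntitoneOn (fun u => expSaturation M u / u) (Ioi 0) :=
  ((concaveOn hM).subset (subset_univ _) (convex_Ici 0)).antitoneOn_div_self
    (by simp [expSaturation])

lemma div_self_mem_Ioo (hM : 0 < M) {u : ℝ} (hu : 0 < u) :
    expSaturation M u / u ∈ Ioo 0 1 := by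
  have hlt : exp (-u / M) < 1 := exp_lt_one_iff.mpr (by rw [neg_div]; linarith [div_pos hu hM])
  have hgt : 1 - u / M < exp (-u / M) := by
    have := add_one_lt_exp (x := -u / M) (by rw [neg_div]; linarith [div_pos hu hM])
    rw [neg_div] at this ⊢; linarith
  constructor
  · exact div_pos (mul_pos hM (by linarith)) hu
  · rw [div_lt_one hu]
    calc M * (1 - exp (-u / M)) < M * (u / M) := by gcongr; linarith
      _ = u := mul_div_cancel₀ u hM.ne'

end expSaturation

theorem fixed_point_strict_mono_in_K_general (M : ℝ) (hM : 0 < M) (K : ℕ)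
    (s t : ℝ) (hs : 0 < s) (ht : 0 < t)
    (heqs : M * (1 - Real.exp (-s / M)) =
      1 - (1 - M * (1 - Real.exp (-s / M)) / s) ^ K)
    (heqt : M * (1 - Real.exp (-t / M)) =
      1 - (1 - M * (1 - Real.exp (-t / M)) / t) ^ (K + 1)) :
    s < t := by
  by_contra! hts
  obtain ⟨hps_pos, hps_lt_one⟩ := expSaturation.div_self_mem_Ioo hM hs
  obtain ⟨-, hpt_lt_one⟩ := expSaturation.div_self_mem_Ioo hM ht
  have hf : expSaturation M t ≤ expSaturation M s := expSaturation.monotone hM.le hts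
  have hp : expSaturation M s / s ≤ expSaturation M t / t :=
    expSaturation.antitoneOn_div_self hM.le ht hs hts
  have : expSaturation M s < expSaturation M t :=
    calc expSaturation M s = 1 - (1 - expSaturation M s / s) ^ K := heqs
      _ < 1 - (1 - expSaturation M s / s) ^ (K + 1) :=
        sub_lt_sub_left (pow_lt_pow_right_of_lt_one₀ (by linarith) (by linarith) K.lt_succ_self) 1
      _ ≤ 1 - (1 - expSaturation M t / t) ^ (K + 1) := by gcongr
      _ = expSaturation M t := heqt.symm
  linarith

/-- For `M > 0`, the unique positive solution `s(K)` of the fixed-point equation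
`M(1 - e^{-s/M}) = 1 - (1 - M(1 - e^{-s/M})/s)^K` is strictly increasing in `K`:
if `s` solves the equation for `K` and `t` solves it for `K + 1`, then `s < t`. -/
theorem fixed_point_strict_mono_in_K (M : ℝ) (hM : 0 < M) (K : ℕ) (hK : 1 ≤ K)
    (s t : ℝ) (hs : 0 < s) (ht : 0 < t)
    (heqs : M * (1 - Real.exp (-s / M)) =
      1 - (1 - M * (1 - Real.exp (-s / M)) / s) ^ K)
    (heqt : M * (1 - Real.exp (-t / M)) =
      1 - (1 - M * (1 - Real.exp (-t / M)) / t) ^ (K + 1)) :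
    s < t :=
  fixed_point_strict_mono_in_K_general M hM K s t hs ht heqs heqt
end

section
/- In the proposal process with parameters K, L, M, atomless signal distributions D, D', and proposal-rate vector x ∈ [0,1]^K, let A_i denote the (random) number of accepted type-i proposals and f_i(x)·n = E[A_i]. Then for every ε > 0, the probability that |A_i − f_i(x)·n| ≥ εn for some i ∈ {1,…,K} tends to 0 as n → ∞; i.e., with probability 1 − o(1), simultaneously for every i, the number of accepted type-i proposals is within o(n) of its expectation. -/
open MeasureTheory
open scoped ENNReal

noncomputable section

/-- Uniform probability measure on a finite type. -/
def unifFin (α : Type*) [Fintype α] [MeasurableSpace α] : Measure α :=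
  (Fintype.card α : ℝ≥0∞)⁻¹ • Measure.count

/-- Index set of the proposals: for each type `i ∈ {1, …, K}` (represented by
`i : Fin K`, so `i = 0` means type `1`), there are `⌊x_i n⌋` proposals of type `i`. -/
abbrev PropIdx (K n : ℕ) (x : Fin K → ℝ) : Type := (i : Fin K) × Fin ⌊x i * n⌋₊

/-- Sample space of the proposal process: each proposal independently gets a uniformly
random target among the `M n` universities together with the independent signal that
this university observes for it. -/
abbrev PropSpace (K M n : ℕ) (x : Fin K → ℝ) : Type :=
  PropIdx K n x → Fin (M * n) × ℝ

/-- The distribution of the proposal process: targets are independent and uniform, and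
signals are independent, drawn from `D` for type-1 proposals and `D'` otherwise. -/
def propMeasure (K M n : ℕ) (D D' : Measure ℝ)
    [IsProbabilityMeasure D] [IsProbabilityMeasure D'] (x : Fin K → ℝ) :
    Measure (PropSpace K M n x) :=
  Measure.pi fun p : PropIdx K n x =>
    (unifFin (Fin (M * n))).prod (if (p.1 : ℕ) = 0 then D else D')

/-- Proposal `p` is accepted: its target university received fewer than `L` proposals
with a strictly higher signal (each university accepts its `L` highest-signal
proposals; ties almost surely do not occur). -/
def PropAccepted (L : ℕ) {K M n : ℕ} {x : Fin K → ℝ} (ω : PropSpace K M n x)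
    (p : PropIdx K n x) : Prop :=
  (Finset.univ.filter fun q : PropIdx K n x =>
    (ω q).1 = (ω p).1 ∧ (ω p).2 < (ω q).2).card < L

open scoped Classical in
/-- The number of accepted type-`i` proposals. -/
noncomputable def Anum (L : ℕ) {K M n : ℕ} {x : Fin K → ℝ} (i : Fin K)
    (ω : PropSpace K M n x) : ℕ :=
  (Finset.univ.filter fun p : PropIdx K n x => p.1 = i ∧ PropAccepted L ω p).card

end

/-!
Moving a single proposal changes each `Anum L i` by at most `3`. Apart from the moved
proposal itself, only two other proposals can change status: one at its old university (the
one that had exactly `L` rivals and loses one) and one at its new university (the one that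
gains an `L`-th rival). This uses that, when signals are distinct, the proposals at one
university all have different rival counts. The Efron–Stein inequality then bounds the
variance of `Anum L i` by `9/2` times the number of proposals, which is at most `K n`.
Efron–Stein is proved by interpolating between two independent copies of the sample, one
coordinate at a time. Each step is controlled by the symmetry that swaps the two copies of
one coordinate. Chebyshev's inequality and a union bound over the `K` types finally give a
deviation probability of order `1/n`.
-/

open MeasureTheory ProbabilityTheory Function Finset

section ProductMeasure

variable {ι κ β : Type*} [MeasurableSpace β]

instance isProbabilityMeasure_sumElim (μ : ι → Measure β) (ν : κ → Measure β)
    [∀ i, IsProbabilityMeasure (μ i)] [∀ k, IsProbabilityMeasure (ν k)] :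
    ∀ a, IsProbabilityMeasure (Sum.elim μ ν a)
  | .inl i => inferInstanceAs (IsProbabilityMeasure (μ i))
  | .inr k => inferInstanceAs (IsProbabilityMeasure (ν k))

lemma MeasureTheory.MeasurePreserving.integral_comp_of_aestronglyMeasurable {α E : Type*}
    [MeasurableSpace α] [NormedAddCommGroup E] [NormedSpace ℝ E] {μ : Measure α}
    {ν : Measure β} {T : α → β} (hT : MeasurePreserving T μ ν) {g : β → E}
    (hg : AEStronglyMeasurable g ν) : ∫ x, g (T x) ∂μ = ∫ y, g y ∂ν := by
  rw [← hT.map_eq] at hg ⊢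
  exact (integral_map hT.measurable.aemeasurable hg).symm

variable [Fintype κ] (ν : κ → Measure β) [∀ k, IsProbabilityMeasure (ν k)]

lemma measurePreserving_comp_of_injective [Fintype ι] {g : ι → κ} (hg : Injective g) :
    MeasurePreserving (fun θ j => θ (g j)) (Measure.pi ν) (Measure.pi fun j => ν (g j)) := by
  refine ⟨measurable_pi_lambda _ fun j => measurable_pi_apply (g j), ?_⟩
  have h := ((iIndepFun_pi (X := fun _ => id) (μ := ν) fun _ => aemeasurable_id).precomp
    hg).map_fun_eq_pi_map fun j => (measurable_pi_apply (g j)).aemeasurable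
  simpa [(measurePreserving_eval ν _).map_eq] using h

lemma measure_pi_apply_eq_apply_eq_zero {α : Type*} [MeasurableSpace α] [MeasurableEq α]
    {g : β → α} (hg : Measurable g) (hν : ∀ k t, ν k (g ⁻¹' {t}) = 0) {a b : κ} (hab : a ≠ b) :
    Measure.pi ν {θ | g (θ a) = g (θ b)} = 0 := by
  have hlaw : (Measure.pi ν).map (fun θ => (θ a, θ b)) = (ν a).prod (ν b) := by
    rw [((iIndepFun_pi (X := fun _ => id) fun _ => aemeasurable_id).indepFun
      hab).map_prod_eq_prod_map_map (measurable_pi_apply a).aemeasurable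
      (measurable_pi_apply b).aemeasurable]
    simp [(measurePreserving_eval ν _).map_eq]
  have hS : MeasurableSet {p : β × β | g p.1 = g p.2} :=
    measurableSet_eq_fun (hg.comp measurable_fst) (hg.comp measurable_snd)
  have hfib : ∀ y, ν b (Prod.mk y ⁻¹' {p : β × β | g p.1 = g p.2}) = 0 := fun y => by
    simpa [Set.preimage, eq_comm] using hν b (g y)
  have h := Measure.map_apply (μ := Measure.pi ν)
    ((measurable_pi_apply a).prodMk (measurable_pi_apply b)) hS
  rw [hlaw, Measure.prod_apply hS, lintegral_congr hfib, lintegral_zero] at h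
  exact h.symm

lemma ae_injective_comp {α : Type*} [MeasurableSpace α] [MeasurableEq α] {g : β → α}
    (hg : Measurable g) (hν : ∀ k t, ν k (g ⁻¹' {t}) = 0) :
    ∀ᵐ θ ∂Measure.pi ν, Injective (g ∘ θ) := by
  have h : ∀ a b, ∀ᵐ θ ∂Measure.pi ν, g (θ a) = g (θ b) → a = b := by
    intro a b
    by_cases hab : a = b
    · exact .of_forall fun _ _ => hab
    · exact measure_mono_null (fun θ hθ => (Classical.not_imp.mp hθ).1)
        (measure_pi_apply_eq_apply_eq_zero ν hg hν hab)
  simp only [← ae_all_iff] at h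
  filter_upwards [h] with θ hθ a b hab using hθ a b hab

end ProductMeasure

section EfronStein

variable {ι γ : Type*}

def copyIndex (s : ι → Bool) (j : ι) : ι ⊕ ι := cond (s j) (.inr j) (.inl j)

lemma copyIndex_injective (s : ι → Bool) : Injective (copyIndex s) := by
  intro a b h
  unfold copyIndex at h
  cases ha : s a <;> cases hb : s b <;> simp_all

def selectCopy (s : ι → Bool) (θ : ι ⊕ ι → γ) : ι → γ := fun j => θ (copyIndex s j)

@[simp] lemma selectCopy_false (θ : ι ⊕ ι → γ) : selectCopy (fun _ => false) θ = θ ∘ .inl := rfl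

@[simp] lemma selectCopy_true (θ : ι ⊕ ι → γ) : selectCopy (fun _ => true) θ = θ ∘ .inr := rfl

lemma selectCopy_comp_swap [DecidableEq ι] (s : ι → Bool) (k : ι) (θ : ι ⊕ ι → γ) :
    selectCopy s (θ ∘ Equiv.swap (.inl k) (.inr k)) = selectCopy (update s k (!s k)) θ := by
  funext j
  simp only [selectCopy, comp_apply, copyIndex]
  by_cases hj : j = k
  · subst hj
    cases s j <;> simp
  · rw [update_of_ne hj]
    cases s j <;> simp [Equiv.swap_apply_of_ne_of_ne, hj]

variable [MeasurableSpace γ] [Fintype ι] (μ : ι → Measure γ) [∀ i, IsProbabilityMeasure (μ i)]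

lemma measurePreserving_selectCopy (s : ι → Bool) :
    MeasurePreserving (selectCopy s) (Measure.pi (Sum.elim μ μ)) (Measure.pi μ) := by
  have h : (fun j => Sum.elim μ μ (copyIndex s j)) = μ := by
    funext j
    unfold copyIndex
    cases s j <;> rfl
  have := measurePreserving_comp_of_injective (Sum.elim μ μ) (copyIndex_injective s)
  rwa [h] at this

lemma measurePreserving_comp_swap [DecidableEq ι] (k : ι) :
    MeasurePreserving (· ∘ Equiv.swap (.inl k) (.inr k)) (Measure.pi (Sum.elim μ μ))
      (Measure.pi (Sum.elim μ μ)) := by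
  have h : (fun a => Sum.elim μ μ (Equiv.swap (.inl k) (.inr k) a)) = Sum.elim μ μ := by
    funext a
    rcases a with j | j <;> by_cases hj : j = k <;> simp [hj, Equiv.swap_apply_of_ne_of_ne]
  have := measurePreserving_comp_of_injective (Sum.elim μ μ)
    (Equiv.swap (Sum.inl k) (Sum.inr k)).injective
  rwa [h] at this

/-- Resampling one coordinate, encoded with two independent samples `θ ∘ Sum.inl` and
`θ ∘ Sum.inr`: switching one coordinate of `f`'s argument to the other sample moves `f` by at
most `c`. -/
def HasBoundedDifferencesAE [DecidableEq ι] (f : (ι → γ) → ℝ) (c : ℝ) : Prop :=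
  ∀ᵐ θ ∂Measure.pi (Sum.elim μ μ), ∀ s k,
    |f (selectCopy s θ) - f (selectCopy (update s k (!s k)) θ)| ≤ c

variable {μ} [DecidableEq ι] {f : (ι → γ) → ℝ} {c : ℝ}

lemma HasBoundedDifferencesAE.integral_mul_selectCopy_sub_le (hbd : HasBoundedDifferencesAE μ f c)
    (hf : MemLp f 2 (Measure.pi μ)) {s : ι → Bool} {k : ι} (hs : s k = false) :
    ∫ θ, f (θ ∘ .inl) * f (selectCopy s θ) ∂Measure.pi (Sum.elim μ μ)
      - ∫ θ, f (θ ∘ .inl) * f (selectCopy (update s k true) θ) ∂Measure.pi (Sum.elim μ μ)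
      ≤ c ^ 2 / 2 := by
  set ν := Measure.pi (Sum.elim μ μ)
  set F : (ι → Bool) → (ι ⊕ ι → γ) → ℝ := fun r θ => f (selectCopy r θ)
  have hF r : MemLp (F r) 2 ν := hf.comp_measurePreserving (measurePreserving_selectCopy μ r)
  have hint r r' : Integrable (fun θ => F r θ * F r' θ) ν := (hF r).integrable_mul (hF r')
  have hint₂ r r' r'' : Integrable (fun θ => F r θ * F r' θ - F r θ * F r'' θ) ν :=
    (hint r r').sub (hint r r'')
  set s₀ : ι → Bool := fun _ => false
  set s₁ := update s₀ k true
  set t := update s k true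
  have h₀ : update s₀ k (!s₀ k) = s₁ := rfl
  have hs' : update s k (!s k) = t := by rw [hs]; rfl
  have ht : update t k (!t k) = s := by simp [t, ← hs]
  have hswap r θ : F r (θ ∘ Equiv.swap (.inl k) (.inr k)) = F (update r k (!r k)) θ :=
    congrArg f (selectCopy_comp_swap r k θ)
  -- swapping the two copies of coordinate `k` exchanges `s₀ ↔ s₁` and `s ↔ t`
  have hsym : ∫ θ, F s₀ θ * F s θ - F s₀ θ * F t θ ∂ν
      = ∫ θ, F s₁ θ * F t θ - F s₁ θ * F s θ ∂ν := by
    have hσ : MeasurePreserving _ ν ν := measurePreserving_comp_swap μ k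
    rw [← hσ.integral_comp_of_aestronglyMeasurable (hint₂ s₀ s t).aestronglyMeasurable]
    simp only [hswap, h₀, hs', ht]
  have hexpand : ∫ θ, (F s₀ θ - F s₁ θ) * (F s θ - F t θ) ∂ν
      = 2 * (∫ θ, F s₀ θ * F s θ ∂ν - ∫ θ, F s₀ θ * F t θ ∂ν) := by
    rw [← integral_sub (hint s₀ s) (hint s₀ t), two_mul]
    nth_rewrite 2 [hsym]
    rw [← integral_add (hint₂ s₀ s t) (hint₂ s₁ t s)]
    congr 1; funext θ; ring
  have hprod : ∀ᵐ θ ∂ν, (F s₀ θ - F s₁ θ) * (F s θ - F t θ) ≤ c ^ 2 := by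
    filter_upwards [hbd] with θ hθ
    have h₁ : |F s₀ θ - F s₁ θ| ≤ c := h₀ ▸ hθ s₀ k
    have h₂ : |F s θ - F t θ| ≤ c := hs' ▸ hθ s k
    calc (F s₀ θ - F s₁ θ) * (F s θ - F t θ) ≤ |F s₀ θ - F s₁ θ| * |F s θ - F t θ| := by
          rw [← abs_mul]; exact le_abs_self _
      _ ≤ c ^ 2 := by rw [sq]; exact mul_le_mul h₁ h₂ (abs_nonneg _) ((abs_nonneg _).trans h₁)
  have hprodInt : Integrable (fun θ => (F s₀ θ - F s₁ θ) * (F s θ - F t θ)) ν :=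
    ((hF s₀).sub (hF s₁)).integrable_mul ((hF s).sub (hF t))
  have hbound := integral_mono_ae hprodInt (integrable_const (c ^ 2)) hprod
  rw [integral_const, probReal_univ, one_smul] at hbound
  change ∫ θ, F s₀ θ * F s θ ∂ν - ∫ θ, F s₀ θ * F t θ ∂ν ≤ _
  linarith

lemma HasBoundedDifferencesAE.integral_mul_selectCopy_mem_le (hbd : HasBoundedDifferencesAE μ f c)
    (hf : MemLp f 2 (Measure.pi μ)) (T : Finset ι) :
    ∫ θ, f (θ ∘ .inl) * f (θ ∘ .inl) ∂Measure.pi (Sum.elim μ μ)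
      - ∫ θ, f (θ ∘ .inl) * f (selectCopy (fun j => decide (j ∈ T)) θ) ∂Measure.pi (Sum.elim μ μ)
      ≤ #T * (c ^ 2 / 2) := by
  induction T using Finset.induction_on with
  | empty => simp
  | insert a T ha ih =>
    have hupd : (fun j => decide (j ∈ insert a T)) = update (fun j => decide (j ∈ T)) a true := by
      funext j
      by_cases hj : j = a <;> simp [hj]
    have hstep := hbd.integral_mul_selectCopy_sub_le hf (s := fun j => decide (j ∈ T)) (k := a)
      (by simpa using ha)
    rw [← hupd] at hstep
    rw [card_insert_of_notMem ha]
    push_cast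
    linarith

/-- The Efron–Stein inequality, for bounded differences. -/
theorem HasBoundedDifferencesAE.variance_pi_le (hbd : HasBoundedDifferencesAE μ f c)
    (hf : MemLp f 2 (Measure.pi μ)) :
    variance f (Measure.pi μ) ≤ Fintype.card ι * c ^ 2 / 2 := by
  have htel := hbd.integral_mul_selectCopy_mem_le hf univ
  have hsq : ∫ θ, f (θ ∘ .inl) * f (θ ∘ .inl) ∂Measure.pi (Sum.elim μ μ)
      = ∫ v, f v ^ 2 ∂Measure.pi μ := by
    simp only [← sq]
    exact (measurePreserving_selectCopy μ fun _ => false).integral_comp_of_aestronglyMeasurable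
      (hf.aestronglyMeasurable.pow 2)
  have hindep : ∫ θ, f (θ ∘ .inl) * f (selectCopy (fun j => decide (j ∈ univ)) θ)
      ∂Measure.pi (Sum.elim μ μ) = (∫ v, f v ∂Measure.pi μ) ^ 2 := by
    simp only [mem_univ, decide_true, selectCopy_true]
    rw [sq, ← integral_prod_mul f f]
    exact (measurePreserving_sumPiEquivProdPi (Sum.elim μ μ)).integral_comp'
      fun z : (ι → γ) × (ι → γ) => f z.1 * f z.2
  rw [variance_eq_sub hf]
  simp only [Pi.pow_apply]
  rw [card_univ] at htel
  linarith

end EfronStein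

lemma Finset.card_filter_le_card_filter_add_card_filter_not_iff {α : Type*} (s : Finset α)
    (A B : α → Prop) [DecidablePred A] [DecidablePred B] :
    #(s.filter A) ≤ #(s.filter B) + #(s.filter fun a => ¬(A a ↔ B a)) := by
  classical
  calc #(s.filter A) ≤ #(s.filter B ∪ s.filter fun a => ¬(A a ↔ B a)) := by
        refine card_le_card fun a ha => ?_
        simp only [mem_union, mem_filter] at ha ⊢
        tauto
    _ ≤ _ := card_union_le _ _

section Rivals

variable {P U S : Type*} [Fintype P] [DecidableEq U] [LinearOrder S]

def rivals (ω : P → U × S) (p : P) : Finset P :=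
  univ.filter fun q => (ω q).1 = (ω p).1 ∧ (ω p).2 < (ω q).2

lemma card_rivals_lt_card_rivals {ω : P → U × S} {p p' : P} (hu : (ω p).1 = (ω p').1)
    (hs : (ω p).2 < (ω p').2) : #(rivals ω p') < #(rivals ω p) := by
  refine card_lt_card (ssubset_iff_of_subset ?_ |>.mpr ⟨p', ?_, ?_⟩)
  · intro r hr
    simp only [rivals, mem_filter, mem_univ, true_and] at hr ⊢
    exact ⟨hr.1.trans hu.symm, hs.trans hr.2⟩
  · simp [rivals, hu, hs]
  · simp [rivals]

lemma eq_of_card_rivals_eq {ω : P → U × S} (hω : Injective (Prod.snd ∘ ω)) {p p' : P}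
    (hu : (ω p).1 = (ω p').1) (hc : #(rivals ω p) = #(rivals ω p')) : p = p' := by
  by_contra hne
  rcases (hω.ne hne).lt_or_gt with h | h
  · exact (card_rivals_lt_card_rivals hu h).ne' hc
  · exact (card_rivals_lt_card_rivals hu.symm h).ne hc

lemma card_filter_rivals_eq_le_one {ω : P → U × S} (hω : Injective (Prod.snd ∘ ω)) (u : U)
    (m : ℕ) : #(univ.filter fun p => (ω p).1 = u ∧ #(rivals ω p) = m) ≤ 1 := by
  refine card_le_one.mpr fun p hp p' hp' => ?_
  simp only [mem_filter, mem_univ, true_and] at hp hp'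
  exact eq_of_card_rivals_eq hω (hp.1.trans hp'.1.symm) (hp.2.trans hp'.2.symm)

lemma rivals_erase_eq [DecidableEq P] {v w : P → U × S} {q : P} (hvw : ∀ p, p ≠ q → v p = w p)
    {p : P} (hp : p ≠ q) : (rivals v p).erase q = (rivals w p).erase q := by
  ext r
  by_cases hr : r = q
  · simp [hr]
  · simp [rivals, hr, hvw r hr, hvw p hp]

lemma card_rivals_eq_of_accept_change {L : ℕ} {v w : P → U × S} {q : P}
    (hvw : ∀ p, p ≠ q → v p = w p) {p : P} (hp : p ≠ q) (hv : #(rivals v p) < L)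
    (hw : ¬#(rivals w p) < L) : (w p).1 = (w q).1 ∧ #(rivals w p) = L := by
  classical
  have hle := card_le_card (erase_subset q (rivals v p))
  rw [rivals_erase_eq hvw hp] at hle
  by_cases hq : q ∈ rivals w p
  · have := card_erase_of_mem hq
    simp only [rivals, mem_filter, mem_univ, true_and] at hq
    exact ⟨hq.1.symm, by omega⟩
  · rw [erase_eq_of_notMem hq] at hle
    omega

lemma card_filter_accept_change_le_three {L : ℕ} {v w : P → U × S} {q : P}
    (hvw : ∀ p, p ≠ q → v p = w p) (hv : Injective (Prod.snd ∘ v))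
    (hw : Injective (Prod.snd ∘ w)) :
    #(univ.filter fun p => ¬(#(rivals v p) < L ↔ #(rivals w p) < L)) ≤ 3 := by
  classical
  have hTv := card_filter_rivals_eq_le_one hv (v q).1 L
  have hTw := card_filter_rivals_eq_le_one hw (w q).1 L
  set Tv := univ.filter fun p => (v p).1 = (v q).1 ∧ #(rivals v p) = L
  set Tw := univ.filter fun p => (w p).1 = (w q).1 ∧ #(rivals w p) = L
  have hsub : (univ.filter fun p => ¬(#(rivals v p) < L ↔ #(rivals w p) < L))
      ⊆ insert q (Tv ∪ Tw) := by
    intro p hp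
    simp only [mem_filter, mem_univ, true_and] at hp
    rw [mem_insert, mem_union]
    by_cases hpq : p = q
    · exact .inl hpq
    by_cases hpv : #(rivals v p) < L
    · exact .inr (.inr (by simpa [Tw] using
        card_rivals_eq_of_accept_change hvw hpq hpv (fun h => hp ⟨fun _ => h, fun _ => hpv⟩)))
    · have hvw' : ∀ r, r ≠ q → w r = v r := fun r hr => (hvw r hr).symm
      exact .inr (.inl (by simpa [Tv] using
        card_rivals_eq_of_accept_change hvw' hpq (by tauto) hpv))
  calc _ ≤ #(insert q (Tv ∪ Tw)) := card_le_card hsub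
    _ ≤ #(Tv ∪ Tw) + 1 := card_insert_le _ _
    _ ≤ #Tv + #Tw + 1 := by gcongr; exact card_union_le _ _
    _ ≤ 3 := by omega

end Rivals

section ProposalProcess

variable {K M n : ℕ} {x : Fin K → ℝ}

lemma propAccepted_iff (L : ℕ) (ω : PropSpace K M n x) (p : PropIdx K n x) :
    PropAccepted L ω p ↔ #(rivals ω p) < L := Iff.rfl

lemma abs_anum_sub_anum_le_three (L : ℕ) (i : Fin K) {v w : PropSpace K M n x}
    {q : PropIdx K n x} (hvw : ∀ p, p ≠ q → v p = w p) (hv : Injective (Prod.snd ∘ v))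
    (hw : Injective (Prod.snd ∘ w)) :
    |(Anum L i v : ℝ) - Anum L i w| ≤ 3 := by
  classical
  have hvw' : ∀ p, p ≠ q → w p = v p := fun p hp => (hvw p hp).symm
  have hc₁ := card_filter_accept_change_le_three (L := L) hvw hv hw
  have hc₂ := card_filter_accept_change_le_three (L := L) hvw' hw hv
  have hsub : ∀ v w : PropSpace K M n x,
      #(univ.filter fun p => ¬((p.1 = i ∧ PropAccepted L v p) ↔ (p.1 = i ∧ PropAccepted L w p)))
        ≤ #(univ.filter fun p => ¬(#(rivals v p) < L ↔ #(rivals w p) < L)) := by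
    intro v w
    refine card_le_card (monotone_filter_right _ fun p h => ?_)
    simp only [propAccepted_iff] at h ⊢
    tauto
  have h₁ := card_filter_le_card_filter_add_card_filter_not_iff univ
    (fun p => p.1 = i ∧ PropAccepted L v p) (fun p => p.1 = i ∧ PropAccepted L w p)
  have h₂ := card_filter_le_card_filter_add_card_filter_not_iff univ
    (fun p => p.1 = i ∧ PropAccepted L w p) (fun p => p.1 = i ∧ PropAccepted L v p)
  have hs₁ := hsub v w
  have hs₂ := hsub w v
  have h₁' : Anum L i v ≤ 3 + Anum L i w := by unfold Anum; omega
  have h₂' : Anum L i w ≤ 3 + Anum L i v := by unfold Anum; omega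
  rw [abs_sub_le_iff, sub_le_iff_le_add, sub_le_iff_le_add]
  exact ⟨by exact_mod_cast h₁', by exact_mod_cast h₂'⟩

lemma measurable_card_filter {Ω P : Type*} [MeasurableSpace Ω] (s : Finset P)
    {A : Ω → P → Prop} [∀ ω, DecidablePred (A ω)] (hA : ∀ p, MeasurableSet {ω | A ω p}) :
    Measurable fun ω => #(s.filter (A ω)) := by
  simp only [card_filter]
  exact Finset.measurable_sum _ fun p _ => Measurable.ite (hA p) measurable_const measurable_const

lemma measurableSet_propAccepted (L : ℕ) (p : PropIdx K n x) :
    MeasurableSet {ω : PropSpace K M n x | PropAccepted L ω p} := by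
  refine measurable_card_filter univ (fun q => ?_) (measurableSet_Iio (a := L))
  exact (measurableSet_eq_fun (measurable_pi_apply q).fst (measurable_pi_apply p).fst).inter
    (measurableSet_lt (f := fun ω : PropSpace K M n x => (ω p).2) (g := fun ω => (ω q).2)
      (measurable_pi_apply p).snd (measurable_pi_apply q).snd)

lemma measurable_anum (L : ℕ) (i : Fin K) : Measurable (Anum L i : PropSpace K M n x → ℕ) := by
  classical
  refine measurable_card_filter univ fun p => ?_
  by_cases hp : p.1 = i
  · simpa [hp] using measurableSet_propAccepted L p
  · simp [hp]

lemma toReal_lintegral_anum (L : ℕ) (i : Fin K) (P : Measure (PropSpace K M n x)) :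
    (∫⁻ ω, (Anum L i ω : ℝ≥0∞) ∂P).toReal = ∫ ω, (Anum L i ω : ℝ) ∂P := by
  have hm : Measurable fun ω : PropSpace K M n x => (Anum L i ω : ℝ≥0∞) :=
    measurable_from_nat.comp (measurable_anum L i)
  rw [← integral_toReal hm.aemeasurable (.of_forall fun _ => ENNReal.natCast_lt_top _)]
  simp

lemma card_propIdx_le (hx : ∀ i, x i ≤ 1) : Fintype.card (PropIdx K n x) ≤ K * n := by
  rw [Fintype.card_sigma]
  calc ∑ i, Fintype.card (Fin ⌊x i * n⌋₊) ≤ ∑ _i : Fin K, n := by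
        refine sum_le_sum fun i _ => ?_
        rw [Fintype.card_fin]
        exact Nat.floor_le_of_le (mul_le_of_le_one_left n.cast_nonneg (hx i))
    _ = K * n := by simp

lemma anum_le_card (L : ℕ) (i : Fin K) (ω : PropSpace K M n x) :
    Anum L i ω ≤ Fintype.card (PropIdx K n x) := by
  classical
  exact card_filter_le _ _

lemma isProbabilityMeasure_unifFin (α : Type*) [Fintype α] [Nonempty α] [MeasurableSpace α] :
    IsProbabilityMeasure (unifFin α) := by
  constructor
  rw [unifFin, Measure.smul_apply, smul_eq_mul, Measure.count_univ,
    ENat.card_eq_coe_fintype_card, ENat.toENNReal_coe]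
  exact ENNReal.inv_mul_cancel (by exact_mod_cast Fintype.card_ne_zero)
    (ENNReal.natCast_ne_top _)

variable (D D' : Measure ℝ) [IsProbabilityMeasure D] [IsProbabilityMeasure D']

noncomputable def propFactor (M n : ℕ) (p : PropIdx K n x) : Measure (Fin (M * n) × ℝ) :=
  (unifFin (Fin (M * n))).prod (if (p.1 : ℕ) = 0 then D else D')

lemma propMeasure_eq_pi : propMeasure K M n D D' x = Measure.pi (propFactor D D' M n) := rfl

lemma isProbabilityMeasure_propFactor (hMn : 0 < M * n) (p : PropIdx K n x) :
    IsProbabilityMeasure (propFactor D D' M n p) := by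
  have : Nonempty (Fin (M * n)) := ⟨⟨0, hMn⟩⟩
  have := isProbabilityMeasure_unifFin (Fin (M * n))
  unfold propFactor
  split_ifs <;> infer_instance

lemma propFactor_snd_preimage_singleton [NullSingletonClass D] [NullSingletonClass D']
    (p : PropIdx K n x) (t : ℝ) : propFactor D D' M n p (Prod.snd ⁻¹' {t}) = 0 := by
  rw [propFactor, ← Set.univ_prod, Measure.prod_prod]
  split_ifs <;> simp

lemma isProbabilityMeasure_propMeasure (hMn : 0 < M * n) :
    IsProbabilityMeasure (propMeasure K M n D D' x) := by
  have := isProbabilityMeasure_propFactor (x := x) D D' hMn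
  rw [propMeasure_eq_pi]
  infer_instance

lemma memLp_anum (L : ℕ) (i : Fin K) (hMn : 0 < M * n) :
    MemLp (fun ω => (Anum L i ω : ℝ)) 2 (propMeasure K M n D D' x) :=
  have := isProbabilityMeasure_propMeasure (x := x) D D' hMn
  .of_bound (measurable_from_nat.comp (measurable_anum L i)).aestronglyMeasurable
    (Fintype.card (PropIdx K n x)) (.of_forall fun ω => by
      rw [Real.norm_natCast]; exact_mod_cast anum_le_card L i ω)

lemma hasBoundedDifferencesAE_anum [NullSingletonClass D] [NullSingletonClass D'] (L : ℕ)
    (i : Fin K) (hMn : 0 < M * n) :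
    HasBoundedDifferencesAE (propFactor D D' M n) (fun ω : PropSpace K M n x => (Anum L i ω : ℝ))
      3 := by
  have := isProbabilityMeasure_propFactor (x := x) D D' hMn
  have hnull : ∀ (a : PropIdx K n x ⊕ PropIdx K n x) t,
      Sum.elim (propFactor D D' M n) (propFactor D D' M n) a (Prod.snd ⁻¹' {t}) = 0 := by
    rintro (p | p) t <;> exact propFactor_snd_preimage_singleton D D' p t
  filter_upwards [ae_injective_comp _ measurable_snd hnull] with θ hθ s k
  refine abs_anum_sub_anum_le_three L i (q := k) (fun p hp => ?_)
    (hθ.comp (copyIndex_injective s)) (hθ.comp (copyIndex_injective _))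
  simp [selectCopy, copyIndex, update_of_ne hp]

lemma variance_anum_le [NullSingletonClass D] [NullSingletonClass D'] (L : ℕ) (i : Fin K)
    (hMn : 0 < M * n) :
    variance (fun ω => (Anum L i ω : ℝ)) (propMeasure K M n D D' x)
      ≤ Fintype.card (PropIdx K n x) * 3 ^ 2 / 2 := by
  have := isProbabilityMeasure_propFactor (x := x) D D' hMn
  exact (hasBoundedDifferencesAE_anum D D' L i hMn).variance_pi_le (memLp_anum D D' L i hMn)

lemma propMeasure_deviation_le [NullSingletonClass D] [NullSingletonClass D'] (L : ℕ)
    (i : Fin K) (hMn : 0 < M * n) {a : ℝ} (ha : 0 < a) :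
    propMeasure K M n D D' x
        {ω | a ≤ |(Anum L i ω : ℝ) - ∫ ω', (Anum L i ω' : ℝ) ∂propMeasure K M n D D' x|}
      ≤ ENNReal.ofReal (Fintype.card (PropIdx K n x) * 3 ^ 2 / 2 / a ^ 2) :=
  have := isProbabilityMeasure_propMeasure (x := x) D D' hMn
  (meas_ge_le_variance_div_sq (memLp_anum D D' L i hMn) ha).trans
    (ENNReal.ofReal_le_ofReal (by gcongr; exact variance_anum_le D D' L i hMn))

lemma propMeasure_exists_deviation_le [NullSingletonClass D] [NullSingletonClass D']
    (L : ℕ) (hM : 0 < M) (hx : ∀ i, x i ≤ 1) {ε : ℝ} (hε : 0 < ε) (hn : 0 < n) :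
    propMeasure K M n D D' x {ω | ∃ i : Fin K,
        ε * n ≤ |(Anum L i ω : ℝ) - (∫⁻ ω', (Anum L i ω' : ℝ≥0∞) ∂propMeasure K M n D D' x).toReal|}
      ≤ ENNReal.ofReal (9 * K ^ 2 / (2 * ε ^ 2) / n) := by
  have hn' : (0 : ℝ) < n := Nat.cast_pos.mpr hn
  simp only [toReal_lintegral_anum, Set.ofPred_exists]
  calc _ ≤ ∑ i : Fin K, propMeasure K M n D D' x
          {ω | ε * n ≤ |(Anum L i ω : ℝ) - ∫ ω', (Anum L i ω' : ℝ) ∂propMeasure K M n D D' x|} :=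
        measure_iUnion_fintype_le _ _
    _ ≤ ∑ _i : Fin K, ENNReal.ofReal (K * n * 3 ^ 2 / 2 / (ε * n) ^ 2) := by
        refine sum_le_sum fun i _ => (propMeasure_deviation_le D D' L i (Nat.mul_pos hM hn)
          (mul_pos hε hn')).trans (ENNReal.ofReal_le_ofReal ?_)
        gcongr
        exact_mod_cast card_propIdx_le hx
    _ = ENNReal.ofReal (9 * K ^ 2 / (2 * ε ^ 2) / n) := by
        rw [sum_const, card_univ, Fintype.card_fin, nsmul_eq_mul, ← ENNReal.ofReal_natCast,
          ← ENNReal.ofReal_mul K.cast_nonneg]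
        congr 1
        field_simp
        ring

end ProposalProcess

open Filter in
theorem accepted_proposals_concentration_general
    (K L M : ℕ) (hM : 0 < M)
    (D D' : Measure ℝ) [IsProbabilityMeasure D] [IsProbabilityMeasure D']
    [NullSingletonClass D] [NullSingletonClass D']
    (x : Fin K → ℝ) (hx : ∀ i, x i ∈ Set.Icc (0 : ℝ) 1) (ε : ℝ) (hε : 0 < ε) :
    Tendsto (fun n : ℕ =>
        propMeasure K M n D D' x {ω : PropSpace K M n x |
          ∃ i : Fin K,
            ε * n ≤ |(Anum L i ω : ℝ) -
              (∫⁻ ω', (Anum L i ω' : ℝ≥0∞) ∂(propMeasure K M n D D' x)).toReal|})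
      atTop (nhds 0) := by
  have hbound :
      Tendsto (fun n : ℕ => ENNReal.ofReal (9 * K ^ 2 / (2 * ε ^ 2) / n)) atTop (nhds 0) := by
    simpa using ENNReal.tendsto_ofReal (tendsto_const_div_atTop_nhds_zero_nat _)
  refine tendsto_of_tendsto_of_tendsto_of_le_of_le' tendsto_const_nhds hbound
    (.of_forall fun _ => zero_le) ?_
  filter_upwards [eventually_gt_atTop 0] with n hn
  exact propMeasure_exists_deviation_le D D' L hM (fun i => (hx i).2) hε hn

open Filter in
/-- Concentration of the numbers of accepted proposals: in the proposal process with
rate vector `x ∈ [0,1]^K`, for every `ε > 0` the probability that the number of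
accepted type-`i` proposals deviates from its expectation `f_i(x)·n` by at least `ε n`
for some `i` tends to `0` as `n → ∞`. -/
theorem accepted_proposals_concentration
    (K L M : ℕ) (hK : 0 < K) (hL : 0 < L) (hM : 0 < M)
    (D D' : Measure ℝ) [IsProbabilityMeasure D] [IsProbabilityMeasure D']
    [NullSingletonClass D] [NullSingletonClass D']
    (x : Fin K → ℝ) (hx : ∀ i, x i ∈ Set.Icc (0 : ℝ) 1) (ε : ℝ) (hε : 0 < ε) :
    Tendsto (fun n : ℕ =>
        propMeasure K M n D D' x {ω : PropSpace K M n x |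
          ∃ i : Fin K,
            ε * n ≤ |(Anum L i ω : ℝ) -
              (∫⁻ ω', (Anum L i ω' : ℝ≥0∞) ∂(propMeasure K M n D D' x)).toReal|})
      atTop (nhds 0) :=
  accepted_proposals_concentration_general K L M hM D D' x hx ε hε
end
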